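/- arXiv:1707.05516 — 10 statements merged into one kernel-verified Lean document; each statement's English description precedes it below -/
import Mathlib

section
/- Let q be a power of a prime p and let k be a positive integer. Set a = (q-1)/gcd(q-1,k) and b = (q+1)/gcd(q+1,k). Then the image of the induced Dickson map D̄_k : F_q → F_q has cardinality a/2 + b/2 + η(k,q), where η(k,q) = 0 if gcd(a,2) = gcd(b,2) and η(k,q) = 1/2 if gcd(a,2) ≠ gcd(b,2). -/
/-!
Work in an algebraic closure `K` of `F = 𝔽_q`. Every `s ∈ K` is `u + u⁻¹` for some `u ≠ 0`,
and since the `q`-power Frobenius fixes exactly `F`, `s ∈ F` iff `u ^ q = u` or `u ^ q = u⁻¹`,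
i.e. `u ∈ μ_{q-1} ∪ μ_{q+1}`. As `D_k (u + u⁻¹) = u ^ k + u⁻¹ ^ k` and `u ↦ u ^ k` maps
`μ_{q-1}`, `μ_{q+1}` onto `μ_a`, `μ_b`, the value set of `D̄_k` is the image of
`S = μ_a ∪ μ_b` under `w ↦ w + w⁻¹`. The fibres of this map on `S` are the pairs `{w, w⁻¹}`,
so twice the count is `|S| + |S ∩ {1, -1}| = a + b - gcd a b + |S ∩ {1, -1}|`; as
`gcd a b ∣ 2`, only the parities of `a` and `b` matter.
-/

open Polynomial Finset

section RootsOfUnity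

theorem IsPrimitiveRoot.pow_div_gcd {M : Type*} [CommMonoid M] {ζ : M} {m : ℕ}
    (hζ : IsPrimitiveRoot ζ m) (hm : 0 < m) (k : ℕ) :
    IsPrimitiveRoot (ζ ^ k) (m / m.gcd k) := by
  rcases eq_or_ne k 0 with rfl | hk
  · simp [Nat.div_self hm]
  · rw [IsPrimitiveRoot.iff_orderOf, orderOf_pow' ζ hk, ← hζ.eq_orderOf]

variable {K : Type*} [Field K]

theorem IsPrimitiveRoot.image_pow_nthRootsFinset [DecidableEq K] {ζ : K} {m : ℕ}
    (hζ : IsPrimitiveRoot ζ m) (hm : 0 < m) (k : ℕ) :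
    (nthRootsFinset m (1 : K)).image (· ^ k) = nthRootsFinset (m / m.gcd k) (1 : K) := by
  have hpos : 0 < m / m.gcd k :=
    Nat.div_pos (Nat.gcd_le_left k hm) (Nat.gcd_pos_of_pos_left k hm)
  have : NeZero (m / m.gcd k) := ⟨hpos.ne'⟩
  ext w
  simp only [mem_image, Polynomial.mem_nthRootsFinset hm, Polynomial.mem_nthRootsFinset hpos]
  constructor
  · rintro ⟨u, hu, rfl⟩
    rw [← pow_mul, ← Nat.mul_div_assoc _ (m.gcd_dvd_left k), mul_comm,
      Nat.mul_div_assoc _ (m.gcd_dvd_right k), pow_mul, hu, one_pow]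
  · intro hw
    obtain ⟨j, -, rfl⟩ := (hζ.pow_div_gcd hm k).eq_pow_of_pow_eq_one hw
    exact ⟨ζ ^ j, by rw [← pow_mul, mul_comm, pow_mul, hζ.pow_eq_one, one_pow],
      by rw [← pow_mul, ← pow_mul, mul_comm]⟩

theorem nthRootsFinset_inter_nthRootsFinset [DecidableEq K] {a b : ℕ} (ha : 0 < a) (hb : 0 < b) :
    nthRootsFinset a (1 : K) ∩ nthRootsFinset b 1 = nthRootsFinset (a.gcd b) 1 := by
  ext w
  simp only [mem_inter, mem_nthRootsFinset ha, mem_nthRootsFinset hb,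
    mem_nthRootsFinset (Nat.gcd_pos_of_pos_left b ha), pow_gcd_eq_one]

theorem inv_mem_nthRootsFinset {n : ℕ} {w : K} (h : w ∈ nthRootsFinset n (1 : K)) :
    w⁻¹ ∈ nthRootsFinset n (1 : K) := by
  rcases n.eq_zero_or_pos with rfl | hn
  · simp at h
  · rw [mem_nthRootsFinset hn] at h ⊢
    rw [inv_pow, h, inv_one]

theorem zero_notMem_nthRootsFinset_union [DecidableEq K] (m n : ℕ) :
    (0 : K) ∉ nthRootsFinset m (1 : K) ∪ nthRootsFinset n 1 := by
  rw [mem_union, not_or]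
  exact ⟨fun h => ne_zero_of_mem_nthRootsFinset one_ne_zero h rfl,
    fun h => ne_zero_of_mem_nthRootsFinset one_ne_zero h rfl⟩

theorem IsAlgClosed.card_nthRootsFinset [IsAlgClosed K] {m : ℕ} (hm : (m : K) ≠ 0) :
    #(nthRootsFinset m (1 : K)) = m := by
  have : NeZero (m : K) := ⟨hm⟩
  obtain ⟨ζ, hζ⟩ := HasEnoughRootsOfUnity.exists_primitiveRoot K m
  exact hζ.card_nthRootsFinset

end RootsOfUnity

section AddInv

variable {K : Type*} [Field K]

theorem add_inv_eq_add_inv_iff {u w : K} (hu : u ≠ 0) (hw : w ≠ 0) :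
    u + u⁻¹ = w + w⁻¹ ↔ u = w ∨ u = w⁻¹ := by
  refine ⟨fun h => ?_, ?_⟩
  · have : (u - w) * (u - w⁻¹) = 0 := by
      linear_combination u * h + mul_inv_cancel₀ hw - mul_inv_cancel₀ hu
    simpa only [mul_eq_zero, sub_eq_zero] using this
  · rintro (rfl | rfl)
    · rfl
    · rw [inv_inv, add_comm]

theorem two_mul_card_image_add_inv [DecidableEq K] (S : Finset K) (h0 : 0 ∉ S)
    (hinv : ∀ w ∈ S, w⁻¹ ∈ S) :
    2 * #(S.image fun w => w + w⁻¹) = #S + #(S.filter fun w => w = w⁻¹) := by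
  set f : K → K := fun w => w + w⁻¹
  have hfiber : ∀ w ∈ S, S.filter (fun u => f u = f w) = {w, w⁻¹} := by
    intro w hw
    ext u
    simp only [mem_filter, mem_insert, mem_singleton]
    constructor
    · rintro ⟨hu, hfu⟩
      exact (add_inv_eq_add_inv_iff (ne_of_mem_of_not_mem hu h0)
        (ne_of_mem_of_not_mem hw h0)).1 hfu
    · rintro (rfl | rfl)
      · exact ⟨hw, rfl⟩
      · exact ⟨hinv w hw, by simp only [f, inv_inv, add_comm]⟩
  have hcount : ∀ v ∈ S.image f,
      #(S.filter (f · = v)) + #((S.filter (fun w => w = w⁻¹)).filter (f · = v)) = 2 := by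
    simp only [mem_image]
    rintro v ⟨w, hw, rfl⟩
    rw [filter_comm, hfiber w hw]
    by_cases hww : w = w⁻¹
    · rw [← hww, pair_eq_singleton, filter_singleton, if_pos hww, card_singleton]
    · have : w⁻¹ ≠ w⁻¹⁻¹ := by rw [inv_inv]; exact Ne.symm hww
      rw [filter_insert, if_neg hww, filter_singleton, if_neg this, card_pair hww, card_empty]
  rw [card_eq_sum_card_fiberwise (s := S) (fun w hw => mem_image_of_mem f hw),
    card_eq_sum_card_fiberwise (s := S.filter _)
      (fun w hw => mem_image_of_mem f (mem_filter.1 hw).1),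
    ← sum_add_distrib, sum_congr rfl hcount, sum_const, smul_eq_mul, mul_comm]

theorem exists_add_inv_eq [IsAlgClosed K] (s : K) : ∃ u ≠ 0, u + u⁻¹ = s := by
  obtain ⟨u, hu⟩ := IsAlgClosed.exists_root (X ^ 2 - C s * X + 1 : K[X]) (by
    rw [show (X ^ 2 - C s * X + 1 : K[X]) = C 1 * X ^ 2 + C (-s) * X + C 1 by
        rw [C_1, C_neg]; ring,
      degree_quadratic one_ne_zero]
    decide)
  have hquad : u * u - s * u + 1 = 0 := by simpa [sq] using hu
  have hu0 : u ≠ 0 := by rintro rfl; simp at hquad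
  refine ⟨u, hu0, ?_⟩
  field_simp
  linear_combination hquad

end AddInv

namespace FiniteField

variable {F : Type*} [Field F] [Fintype F] {K : Type*} [Field K] [Algebra F K]

theorem mem_range_algebraMap_iff {z : K} :
    z ∈ Set.range (algebraMap F K) ↔ z ^ Fintype.card F = z := by
  refine ⟨?_, fun hz => ?_⟩
  · rintro ⟨x, rfl⟩
    rw [← map_pow, pow_card]
  · have hsplit : (X ^ Fintype.card F - X : F[X]).Splits := by
      rw [splits_iff_card_roots, roots_X_pow_card_sub_X,
        X_pow_card_sub_X_natDegree_eq F Fintype.one_lt_card]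
      rfl
    exact hsplit.mem_range_of_isRoot (X_pow_card_sub_X_ne_zero F Fintype.one_lt_card)
      (by simp [hz])

theorem add_inv_mem_range_algebraMap_iff {u : K} (hu : u ≠ 0) :
    u + u⁻¹ ∈ Set.range (algebraMap F K) ↔
      u ^ (Fintype.card F - 1) = 1 ∨ u ^ (Fintype.card F + 1) = 1 := by
  have hfrob : (u + u⁻¹) ^ Fintype.card F = u ^ Fintype.card F + (u ^ Fintype.card F)⁻¹ := by
    rw [← inv_pow]
    exact map_add (frobeniusAlgHom F K) u u⁻¹
  rw [mem_range_algebraMap_iff, hfrob, add_inv_eq_add_inv_iff (pow_ne_zero _ hu) hu]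
  refine or_congr ?_ ?_
  · rw [← pow_sub_one_mul Fintype.card_ne_zero]
    exact mul_eq_right₀ hu
  · rw [pow_succ]
    exact (mul_eq_one_iff_eq_inv₀ hu).symm

end FiniteField

section CharDvd

variable {K : Type*} [Field K] {q : ℕ}

theorem natCast_ne_zero_of_dvd_sub_one {m : ℕ} (hq : (q : K) = 0) (hq0 : q ≠ 0)
    (h : m ∣ q - 1) : (m : K) ≠ 0 := by
  obtain ⟨c, hc⟩ := h
  intro hm
  have := congrArg (Nat.cast : ℕ → K) hc
  push_cast [Nat.cast_sub (Nat.one_le_iff_ne_zero.2 hq0), hq, hm] at this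
  simp at this

theorem natCast_ne_zero_of_dvd_add_one {m : ℕ} (hq : (q : K) = 0) (h : m ∣ q + 1) :
    (m : K) ≠ 0 := by
  obtain ⟨c, hc⟩ := h
  intro hm
  have := congrArg (Nat.cast : ℕ → K) hc
  push_cast [hq, hm] at this
  simp at this

variable [DecidableEq K] {a b : ℕ}

theorem card_nthRootsFinset_union_add_gcd [IsAlgClosed K] (hq : (q : K) = 0) (hq0 : q ≠ 0)
    (ha : a ∣ q - 1) (hb : b ∣ q + 1) :
    #(nthRootsFinset a (1 : K) ∪ nthRootsFinset b 1) + a.gcd b = a + b := by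
  have ha' := natCast_ne_zero_of_dvd_sub_one hq hq0 ha
  have hb' := natCast_ne_zero_of_dvd_add_one hq hb
  have hab' := natCast_ne_zero_of_dvd_sub_one hq hq0 ((a.gcd_dvd_left b).trans ha)
  have ha0 : 0 < a := Nat.pos_of_ne_zero fun h => ha' (by simp [h])
  have hb0 : 0 < b := Nat.pos_of_ne_zero fun h => hb' (by simp [h])
  rw [← IsAlgClosed.card_nthRootsFinset hab', ← nthRootsFinset_inter_nthRootsFinset ha0 hb0,
    card_union_add_card_inter, IsAlgClosed.card_nthRootsFinset ha',
    IsAlgClosed.card_nthRootsFinset hb']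

theorem card_filter_eq_inv_nthRootsFinset_union (hq : (q : K) = 0) (hq0 : q ≠ 0)
    (ha : a ∣ q - 1) (hb : b ∣ q + 1) :
    #((nthRootsFinset a (1 : K) ∪ nthRootsFinset b 1).filter fun w => w = w⁻¹) =
      if Even a ∨ Even b then 2 else 1 := by
  have hq1 : q ≠ 1 := by rintro rfl; simp at hq
  have ha0 : 0 < a := Nat.pos_of_dvd_of_pos ha (by omega)
  have hb0 : 0 < b := Nat.pos_of_dvd_of_pos hb (by omega)
  set S := nthRootsFinset a (1 : K) ∪ nthRootsFinset b 1
  have hmem : ∀ w : K, w ∈ S ↔ w ^ a = 1 ∨ w ^ b = 1 := by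
    simp [S, mem_nthRootsFinset ha0, mem_nthRootsFinset hb0]
  have hfix : S.filter (fun w => w = w⁻¹) = S.filter (fun w => w = 1 ∨ w = -1) := by
    refine filter_congr fun w hw => ?_
    have hw0 : w ≠ 0 := ne_of_mem_of_not_mem hw (zero_notMem_nthRootsFinset_union _ _)
    rw [← mul_eq_one_iff_eq_inv₀ hw0, mul_self_eq_one_iff]
  have hone : (1 : K) ∈ S := (hmem 1).2 (Or.inl (one_pow a))
  rw [hfix]
  split_ifs with hev
  · have h2 : ((2 : ℕ) : K) ≠ 0 := hev.elim
      (fun h => natCast_ne_zero_of_dvd_sub_one hq hq0 ((even_iff_two_dvd.1 h).trans ha))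
      (fun h => natCast_ne_zero_of_dvd_add_one hq ((even_iff_two_dvd.1 h).trans hb))
    have hne : (1 : K) ≠ -1 := fun h => h2 (by push_cast; linear_combination h)
    have hneg : (-1 : K) ∈ S := (hmem _).2 (hev.imp Even.neg_one_pow Even.neg_one_pow)
    have hpair : S.filter (fun w => w = 1 ∨ w = -1) = {1, -1} := by
      ext w
      simp only [mem_filter, mem_insert, mem_singleton]
      exact and_iff_right_of_imp (by rintro (rfl | rfl); exacts [hone, hneg])
    rw [hpair, card_pair hne]
  · have hodd : Odd a ∧ Odd b := by simpa [not_or] using hev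
    have hsingle : S.filter (fun w => w = 1 ∨ w = -1) = {1} := by
      ext w
      simp only [mem_filter, mem_singleton]
      refine ⟨?_, fun h => ⟨h ▸ hone, Or.inl h⟩⟩
      rintro ⟨hw, rfl | rfl⟩
      · rfl
      · rwa [hmem, hodd.1.neg_one_pow, hodd.2.neg_one_pow, or_self] at hw
    rw [hsingle, card_singleton]

end CharDvd

section Dickson

variable {F : Type*} [Field F] [Fintype F] (K : Type*) [Field K] [IsAlgClosed K] [Algebra F K]
  [DecidableEq K]

theorem range_algebraMap_eq_image_add_inv :
    Set.range (algebraMap F K) = (fun u => u + u⁻¹) ''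
      ↑(nthRootsFinset (Fintype.card F - 1) (1 : K) ∪ nthRootsFinset (Fintype.card F + 1) 1) := by
  have hq : 0 < Fintype.card F - 1 := Nat.sub_pos_of_lt Fintype.one_lt_card
  have hmem : ∀ u : K, u ∈ (↑(nthRootsFinset (Fintype.card F - 1) (1 : K) ∪
      nthRootsFinset (Fintype.card F + 1) 1) : Set K) ↔
        u ^ (Fintype.card F - 1) = 1 ∨ u ^ (Fintype.card F + 1) = 1 := by
    simp [mem_nthRootsFinset hq]
  ext z
  constructor
  · intro hz
    obtain ⟨u, hu0, rfl⟩ := exists_add_inv_eq z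
    exact ⟨u, (hmem u).2 ((FiniteField.add_inv_mem_range_algebraMap_iff hu0).1 hz), rfl⟩
  · rintro ⟨u, hu, rfl⟩
    exact (FiniteField.add_inv_mem_range_algebraMap_iff
      (ne_of_mem_of_not_mem hu (zero_notMem_nthRootsFinset_union _ _))).2 ((hmem u).1 hu)

theorem image_algebraMap_range_dickson (k : ℕ) :
    algebraMap F K '' Set.range (fun x : F => aeval x (dickson 1 (1 : ℤ) k)) =
      (fun w => w + w⁻¹) '' ((· ^ k) ''
        ↑(nthRootsFinset (Fintype.card F - 1) (1 : K) ∪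
          nthRootsFinset (Fintype.card F + 1) 1)) := by
  have hD : ∀ s : K, aeval s (dickson 1 (1 : ℤ) k) = eval s (dickson 1 (1 : K) k) := fun s => by
    rw [aeval_def, eval₂_eq_eval_map, map_dickson, map_one]
  have hcomp : (algebraMap F K ∘ fun x : F => aeval x (dickson 1 (1 : ℤ) k)) =
      (fun s => eval s (dickson 1 (1 : K) k)) ∘ algebraMap F K := by
    ext x
    simp only [Function.comp_apply, ← aeval_algebraMap_apply, hD]
  rw [← Set.range_comp, hcomp, Set.range_comp, range_algebraMap_eq_image_add_inv, Set.image_image,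
    Set.image_image]
  refine Set.image_congr fun u hu => ?_
  have hu0 : u ≠ 0 := ne_of_mem_of_not_mem hu (zero_notMem_nthRootsFinset_union _ _)
  rw [dickson_one_one_eval_add_inv u u⁻¹ (mul_inv_cancel₀ hu0), inv_pow]

theorem ncard_range_dickson (k : ℕ) :
    (Set.range fun x : F => aeval x (dickson 1 (1 : ℤ) k)).ncard =
      #((nthRootsFinset ((Fintype.card F - 1) / (Fintype.card F - 1).gcd k) (1 : K) ∪
        nthRootsFinset ((Fintype.card F + 1) / (Fintype.card F + 1).gcd k) 1).image
          fun w => w + w⁻¹) := by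
  have hq : ((Fintype.card F : ℕ) : K) = 0 := by
    rw [← map_natCast (algebraMap F K), FiniteField.cast_card_eq_zero, map_zero]
  have : NeZero ((Fintype.card F - 1 : ℕ) : K) :=
    ⟨natCast_ne_zero_of_dvd_sub_one hq Fintype.card_ne_zero dvd_rfl⟩
  have : NeZero ((Fintype.card F + 1 : ℕ) : K) := ⟨natCast_ne_zero_of_dvd_add_one hq dvd_rfl⟩
  obtain ⟨ζ, hζ⟩ := HasEnoughRootsOfUnity.exists_primitiveRoot K (Fintype.card F - 1)
  obtain ⟨ξ, hξ⟩ := HasEnoughRootsOfUnity.exists_primitiveRoot K (Fintype.card F + 1)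
  rw [← Set.ncard_image_of_injective _ (algebraMap F K).injective, image_algebraMap_range_dickson,
    ← coe_image, ← coe_image, Set.ncard_coe_finset, image_union,
    hζ.image_pow_nthRootsFinset (Nat.sub_pos_of_lt Fintype.one_lt_card),
    hξ.image_pow_nthRootsFinset (Nat.succ_pos _)]

end Dickson

theorem Nat.gcd_dvd_two_of_dvd_sub_one_of_dvd_add_one {q a b : ℕ} (ha : a ∣ q - 1)
    (hb : b ∣ q + 1) : a.gcd b ∣ 2 := by
  rcases Nat.eq_zero_or_pos q with rfl | hq
  · simp_all
  · rw [show 2 = q + 1 - (q - 1) by omega]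
    exact Nat.dvd_sub ((a.gcd_dvd_right b).trans hb) ((a.gcd_dvd_left b).trans ha)

theorem cast_eq_half_add_half_add {a b N : ℕ} (hab : a.gcd b ∣ 2)
    (h : 2 * N + a.gcd b = a + b + if Even a ∨ Even b then 2 else 1) :
    (N : ℚ) = a / 2 + b / 2 + if a.gcd 2 = b.gcd 2 then 0 else 1 / 2 := by
  have hgcd2 : ∀ n : ℕ, n.gcd 2 = if Even n then 2 else 1 := by
    intro n
    split_ifs with hn
    · exact Nat.gcd_eq_right (even_iff_two_dvd.1 hn)
    · exact Nat.coprime_two_right.2 (Nat.not_even_iff_odd.1 hn)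
  have hgcd : a.gcd b = if Even a ∧ Even b then 2 else 1 := by
    split_ifs with hab2
    · exact Nat.dvd_antisymm hab
        (Nat.dvd_gcd (even_iff_two_dvd.1 hab2.1) (even_iff_two_dvd.1 hab2.2))
    · refine ((Nat.dvd_prime Nat.prime_two).1 hab).resolve_right fun h2 => hab2 ?_
      exact ⟨even_iff_two_dvd.2 (h2 ▸ a.gcd_dvd_left b),
        even_iff_two_dvd.2 (h2 ▸ a.gcd_dvd_right b)⟩
  rw [hgcd2, hgcd2]
  rw [hgcd] at h
  by_cases ha : Even a <;> by_cases hb : Even b <;>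
    simp only [ha, hb, and_self, and_true, and_false, or_self, or_true, or_false, ↓reduceIte,
      OfNat.ofNat_ne_one, OfNat.one_ne_ofNat] at h ⊢ <;>
    · qify at h
      linarith

theorem stmt_1_general (q k : ℕ)
    (F : Type) [Field F] [Fintype F] (hF : Fintype.card F = q)
    (a b : ℕ) (ha : a = (q - 1) / Nat.gcd (q - 1) k) (hb : b = (q + 1) / Nat.gcd (q + 1) k)
    (η : ℚ) (hη : η = if Nat.gcd a 2 = Nat.gcd b 2 then 0 else 1 / 2) :
    ((Set.range fun x : F => Polynomial.aeval x (Polynomial.dickson 1 (1 : ℤ) k)).ncard : ℚ)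
      = (a : ℚ) / 2 + (b : ℚ) / 2 + η := by
  classical
  let K := AlgebraicClosure F
  have hqK : (q : K) = 0 := by
    rw [← hF, ← map_natCast (algebraMap F K), FiniteField.cast_card_eq_zero, map_zero]
  have hq0 : q ≠ 0 := hF ▸ Fintype.card_ne_zero
  have had : a ∣ q - 1 := ha ▸ Nat.div_dvd_of_dvd (Nat.gcd_dvd_left _ _)
  have hbd : b ∣ q + 1 := hb ▸ Nat.div_dvd_of_dvd (Nat.gcd_dvd_left _ _)
  have hinv : ∀ w ∈ nthRootsFinset a (1 : K) ∪ nthRootsFinset b 1,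
      w⁻¹ ∈ nthRootsFinset a (1 : K) ∪ nthRootsFinset b 1 := fun w hw => by
    rw [mem_union] at hw ⊢
    exact hw.imp inv_mem_nthRootsFinset inv_mem_nthRootsFinset
  rw [ncard_range_dickson K k, hF, ← ha, ← hb, hη]
  refine cast_eq_half_add_half_add (Nat.gcd_dvd_two_of_dvd_sub_one_of_dvd_add_one had hbd) ?_
  rw [two_mul_card_image_add_inv _ (zero_notMem_nthRootsFinset_union a b) hinv,
    card_filter_eq_inv_nthRootsFinset_union hqK hq0 had hbd,
    ← card_nthRootsFinset_union_add_gcd hqK hq0 had hbd]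
  ring

/-- the value set of the Dickson polynomial map over `F_q` has
cardinality `a/2 + b/2 + η(k,q)`. -/
theorem stmt_1 (p n q k : ℕ) (hp : p.Prime) (hn : 0 < n) (hq : q = p ^ n) (hk : 0 < k)
    (F : Type) [Field F] [Fintype F] (hF : Fintype.card F = q)
    (a b : ℕ) (ha : a = (q - 1) / Nat.gcd (q - 1) k) (hb : b = (q + 1) / Nat.gcd (q + 1) k)
    (η : ℚ) (hη : η = if Nat.gcd a 2 = Nat.gcd b 2 then 0 else 1 / 2) :
    ((Set.range fun x : F => Polynomial.aeval x (Polynomial.dickson 1 (1 : ℤ) k)).ncard : ℚ)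
      = (a : ℚ) / 2 + (b : ℚ) / 2 + η :=
  stmt_1_general q k F hF a b ha hb η hη
end

section
/- Let q ≥ 2 be a power of a prime. The set of complex solutions of the equation D_q(x) = x equals the union {ζ + ζ⁻¹ : ζ ∈ ℂ, ζ^{q-1} = 1} ∪ {ζ + ζ⁻¹ : ζ ∈ ℂ, ζ^{q+1} = 1}. -/
open Polynomial

lemma dickson_aeval_aux (y : ℂ) (h : y ≠ 0) (n : ℕ) :
    Polynomial.aeval (y + y⁻¹) (Polynomial.dickson 1 (1 : ℤ) n) = y ^ n + (y⁻¹) ^ n := by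
  rw [aeval_def, eval₂_eq_eval_map, Polynomial.map_dickson]
  simpa using Polynomial.dickson_one_one_eval_add_inv y y⁻¹ (mul_inv_cancel₀ h) n

/-- for a prime power `q ≥ 2`, the complex solutions of `D_q(x) = x` are exactly
`{ζ + ζ⁻¹ : ζ^(q-1) = 1} ∪ {ζ + ζ⁻¹ : ζ^(q+1) = 1}`. -/
theorem stmt_3 (q : ℕ) (hq : IsPrimePow q) :
    {x : ℂ | Polynomial.aeval x (Polynomial.dickson 1 (1 : ℤ) q) = x}
      = {x : ℂ | ∃ ζ : ℂ, ζ ^ (q - 1) = 1 ∧ x = ζ + ζ⁻¹}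
        ∪ {x : ℂ | ∃ ζ : ℂ, ζ ^ (q + 1) = 1 ∧ x = ζ + ζ⁻¹} := by
  obtain ⟨m, rfl⟩ : ∃ m, q = m + 2 := ⟨q - 2, by have := hq.two_le; omega⟩
  have hsub : m + 2 - 1 = m + 1 := by omega
  ext x
  simp only [Set.mem_setOf_eq, Set.mem_union, hsub]
  constructor
  · intro hx
    obtain ⟨y, hy⟩ : ∃ y : ℂ, y ^ 2 - x * y + 1 = 0 := by
      obtain ⟨z, hz⟩ : ∃ z, (X ^ 2 - C x * X + 1 : ℂ[X]).IsRoot z := by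
        apply Complex.exists_root
        have hd : (X ^ 2 - C x * X + 1 : ℂ[X]).degree = 2 := by compute_degree!
        rw [hd]; norm_num
      exact ⟨z, by simpa using hz⟩
    have hy0 : y ≠ 0 := by rintro rfl; simp at hy
    have hxy : x = y + y⁻¹ := by
      field_simp
      linear_combination -hy
    rw [hxy, dickson_aeval_aux y hy0] at hx
    have hpow : y ^ (m + 2) ≠ 0 := pow_ne_zero _ hy0
    rw [inv_pow] at hx
    have key : (y ^ (m + 1) - 1) * (y ^ (m + 3) - 1) = 0 := by
      have h0 := hx
      field_simp at h0
      have h2 : (y ^ (m + 1) - 1) * (y ^ (m + 3) - 1) * y = 0 := by linear_combination h0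
      rcases mul_eq_zero.mp h2 with h | h
      · exact h
      · exact absurd h hy0
    rcases mul_eq_zero.mp key with h | h
    · exact Or.inl ⟨y, sub_eq_zero.mp h, hxy⟩
    · exact Or.inr ⟨y, sub_eq_zero.mp h, hxy⟩
  · rintro (⟨ζ, hζ, rfl⟩ | ⟨ζ, hζ, rfl⟩)
    · have hζ0 : ζ ≠ 0 := by rintro rfl; simp at hζ
      rw [dickson_aeval_aux ζ hζ0, inv_pow]
      have h1 : ζ ^ (m + 2) = ζ := by
        calc ζ ^ (m + 2) = ζ ^ (m + 1) * ζ := by ring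
        _ = ζ := by rw [hζ, one_mul]
      rw [h1]
    · have hζ0 : ζ ≠ 0 := by rintro rfl; simp at hζ
      rw [dickson_aeval_aux ζ hζ0, inv_pow]
      have h1 : ζ ^ (m + 2) = ζ⁻¹ :=
        eq_inv_of_mul_eq_one_left (by rw [← pow_succ]; exact hζ)
      rw [h1, inv_inv, add_comm]
end

section
/- Let q ≥ 2 be a power of a prime. The set {ζ + ζ⁻¹ : ζ ∈ ℂ, ζ^{q-1} = 1} ∪ {ζ + ζ⁻¹ : ζ ∈ ℂ, ζ^{q+1} = 1} ⊆ ℂ has exactly q elements. -/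
/-!
If `ζ + ζ⁻¹ = η + η⁻¹` with `ζ, η ≠ 0`, then `η = ζ` or `η = ζ⁻¹`; hence the traces coming from
both `μ_m` and `μ_n` are exactly those coming from `μ_{gcd(m, n)}`. The traces of `μ_m` are the
values `2 cos (2πk/m)` for `0 ≤ k ≤ m/2`, which are distinct, so there are `m/2 + 1` of them.
Since `gcd(q - 1, q + 1)` is `1` for even `q` and `2` for odd `q`, inclusion–exclusion gives
`((q - 1)/2 + 1) + ((q + 1)/2 + 1) - (gcd(q - 1, q + 1)/2 + 1) = q`.
-/

open Real

def rootOfUnityTraces (m : ℕ) : Set ℂ := {x | ∃ ζ : ℂ, ζ ^ m = 1 ∧ x = ζ + ζ⁻¹}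

noncomputable def rootOfUnityTrace (m k : ℕ) : ℂ := (2 * Real.cos (2 * π * k / m) : ℝ)

lemma eq_or_eq_inv_of_add_inv_eq_add_inv {K : Type*} [Field K] {a b : K} (ha : a ≠ 0)
    (hb : b ≠ 0) (h : a + a⁻¹ = b + b⁻¹) : b = a ∨ b = a⁻¹ := by
  have key : (b - a) * (b - a⁻¹) = 0 := by
    linear_combination (-b) * h + mul_inv_cancel₀ ha - mul_inv_cancel₀ hb
  rcases mul_eq_zero.1 key with h | h
  exacts [.inl (sub_eq_zero.1 h), .inr (sub_eq_zero.1 h)]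

lemma rootOfUnityTraces_inter (m n : ℕ) :
    rootOfUnityTraces m ∩ rootOfUnityTraces n = rootOfUnityTraces (m.gcd n) := by
  ext x
  constructor
  · rintro ⟨⟨ζ, hζ, rfl⟩, η, hη, hx⟩
    by_cases hη0 : η = 0
    · obtain rfl : n = 0 := zero_pow_eq_one₀.1 (hη0 ▸ hη)
      exact ⟨ζ, by simpa using hζ, rfl⟩
    by_cases hζ0 : ζ = 0
    · obtain rfl : m = 0 := zero_pow_eq_one₀.1 (hζ0 ▸ hζ)
      exact ⟨η, by simpa using hη, hx⟩
    have hηm : η ^ m = 1 := by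
      rcases eq_or_eq_inv_of_add_inv_eq_add_inv hζ0 hη0 hx with rfl | rfl
      exacts [hζ, by rw [inv_pow, hζ, inv_one]]
    exact ⟨η, pow_gcd_eq_one.2 ⟨hηm, hη⟩, hx⟩
  · rintro ⟨ζ, hζ, rfl⟩
    obtain ⟨hm, hn⟩ := pow_gcd_eq_one.1 hζ
    exact ⟨⟨ζ, hm, rfl⟩, ζ, hn, rfl⟩

lemma Complex.exp_mul_I_add_inv (θ : ℝ) :
    Complex.exp (θ * Complex.I) + (Complex.exp (θ * Complex.I))⁻¹ = (2 * Real.cos θ : ℝ) := by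
  rw [← Complex.exp_neg, ← neg_mul, ← Complex.two_cos]
  push_cast
  rfl

/-- Replacing `ζ` by `ζ⁻¹` turns the index `k` into `m - k`, so `k ≤ m / 2` suffices. -/
lemma rootOfUnityTraces_eq_image {m : ℕ} (hm : 0 < m) :
    rootOfUnityTraces m = (Finset.range (m / 2 + 1)).image (rootOfUnityTrace m) := by
  have primitive := Complex.isPrimitiveRoot_exp m hm.ne'
  have trace_pow (k : ℕ) : Complex.exp (2 * π * Complex.I / m) ^ k
      + (Complex.exp (2 * π * Complex.I / m) ^ k)⁻¹ = rootOfUnityTrace m k := by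
    have angle : (k : ℂ) * (2 * π * Complex.I / m) = ((2 * π * k / m : ℝ) : ℂ) * Complex.I := by
      push_cast
      ring
    rw [← Complex.exp_nat_mul, angle, Complex.exp_mul_I_add_inv, rootOfUnityTrace]
  ext x
  simp only [rootOfUnityTraces, Set.mem_ofPred_eq, Finset.coe_image, Set.mem_image,
    Finset.coe_range, Set.mem_Iio]
  constructor
  · rintro ⟨ζ, hζ, rfl⟩
    have := NeZero.of_pos hm
    obtain ⟨k, hk, rfl⟩ := primitive.eq_pow_of_pow_eq_one hζ
    rw [trace_pow]
    rcases le_or_gt (2 * k) m with h2k | h2k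
    · exact ⟨k, by omega, rfl⟩
    · refine ⟨m - k, by omega, ?_⟩
      have : (m : ℝ) ≠ 0 := by positivity
      rw [rootOfUnityTrace, rootOfUnityTrace, Nat.cast_sub hk.le, ← Real.cos_two_pi_sub]
      congr 3
      field_simp
      ring
  · rintro ⟨k, -, rfl⟩
    exact ⟨_, by rw [pow_right_comm, primitive.pow_eq_one, one_pow], (trace_pow k).symm⟩

lemma rootOfUnityTrace_injOn {m : ℕ} (hm : 0 < m) :
    Set.InjOn (rootOfUnityTrace m) (Finset.range (m / 2 + 1)) := by
  have angle_mem (k : ℕ) (hk : k ∈ Finset.range (m / 2 + 1)) :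
      2 * π * k / m ∈ Set.Icc 0 π := by
    have : 2 * (k : ℝ) ≤ m := by
      have := Finset.mem_range.1 hk
      norm_cast
      omega
    refine ⟨by positivity, ?_⟩
    rw [div_le_iff₀ (by positivity)]
    nlinarith [Real.pi_pos]
  intro k hk l hl h
  have hangle := Real.injOn_cos (angle_mem k hk) (angle_mem l hl)
    (mul_right_injective₀ two_ne_zero (Complex.ofReal_injective h))
  have : (m : ℝ) ≠ 0 := by positivity
  field_simp at hangle
  exact_mod_cast hangle

lemma rootOfUnityTraces_finite {m : ℕ} (hm : 0 < m) : (rootOfUnityTraces m).Finite := by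
  rw [rootOfUnityTraces_eq_image hm]
  exact Finset.finite_toSet _

lemma ncard_rootOfUnityTraces {m : ℕ} (hm : 0 < m) :
    (rootOfUnityTraces m).ncard = m / 2 + 1 := by
  rw [rootOfUnityTraces_eq_image hm, Set.ncard_coe_finset,
    Finset.card_image_of_injOn (rootOfUnityTrace_injOn hm), Finset.card_range]

lemma Nat.gcd_sub_one_add_one (q : ℕ) (hq : 1 ≤ q) :
    (q - 1).gcd (q + 1) = if Even q then 1 else 2 := by
  rw [show q + 1 = q - 1 + 2 by omega, Nat.gcd_self_add_right]
  split_ifs with hq'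
  · exact Nat.coprime_two_right.2 (by grind)
  · exact Nat.gcd_eq_right (even_iff_two_dvd.1 (by grind))

/-- for a prime power `q ≥ 2`, the set
`{ζ + ζ⁻¹ : ζ^(q-1) = 1} ∪ {ζ + ζ⁻¹ : ζ^(q+1) = 1} ⊆ ℂ` has exactly `q` elements. -/
theorem stmt_4 (q : ℕ) (hq : IsPrimePow q) :
    ({x : ℂ | ∃ ζ : ℂ, ζ ^ (q - 1) = 1 ∧ x = ζ + ζ⁻¹}
      ∪ {x : ℂ | ∃ ζ : ℂ, ζ ^ (q + 1) = 1 ∧ x = ζ + ζ⁻¹}).ncard = q := by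
  have hq2 := hq.two_le
  change (rootOfUnityTraces (q - 1) ∪ rootOfUnityTraces (q + 1)).ncard = q
  have h := Set.ncard_union_add_ncard_inter _ _
    (rootOfUnityTraces_finite (m := q - 1) (by omega))
    (rootOfUnityTraces_finite (m := q + 1) (by omega))
  rw [rootOfUnityTraces_inter, ncard_rootOfUnityTraces (m := q - 1) (by omega),
    ncard_rootOfUnityTraces (m := q + 1) (by omega),
    ncard_rootOfUnityTraces (Nat.gcd_pos_of_pos_right _ (by omega)),
    Nat.gcd_sub_one_add_one q (by omega)] at h
  split_ifs at h with hq_even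
  · obtain ⟨c, rfl⟩ := hq_even
    omega
  · obtain ⟨c, rfl⟩ := Nat.not_even_iff_odd.1 hq_even
    omega
end

section
/- Let q be a power of a prime and let f, g ∈ ℤ[X,Y] be a q-th folding polynomial pair of type A₂. Then the set of fixed points {(x,y) ∈ ℂ² : f(x,y) = x and g(x,y) = y} equals the union S₁ ∪ S₂ ∪ S₃, where S₁ = {Φ_{A₂}(ζ,ξ) : ζ^{q-1} = ξ^{q-1} = 1}, S₂ = {Φ_{A₂}(ζ, ζ^q) : ζ^{q²-1} = 1}, and S₃ = {Φ_{A₂}(ζ, ζ^q) : ζ^{q²+q+1} = 1}. -/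
/-- `Φ_{A₂}(u,v) = (u + v + (uv)⁻¹, u⁻¹ + v⁻¹ + uv)`. -/
noncomputable def PhiA2 (u v : ℂ) : ℂ × ℂ := (u + v + (u * v)⁻¹, u⁻¹ + v⁻¹ + u * v)

/-- `(f, g)` is a `k`-th folding polynomial pair of type `A₂`. -/
def IsFoldingPairA2 (k : ℕ) (f g : MvPolynomial (Fin 2) ℤ) : Prop :=
  ∀ u v : ℂ, u ≠ 0 → v ≠ 0 →
    (MvPolynomial.aeval ![(PhiA2 u v).1, (PhiA2 u v).2] f,
     MvPolynomial.aeval ![(PhiA2 u v).1, (PhiA2 u v).2] g) = PhiA2 (u ^ k) (v ^ k)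


open Polynomial in
lemma quad_root (a b : ℂ) : ∃ v : ℂ, v^2 + a*v + b = 0 := by
  have hdeg : (X^2 + C a * X + C b : ℂ[X]).degree = 2 := by compute_degree!
  obtain ⟨v, hv⟩ := Complex.exists_root (f := X^2 + C a * X + C b) (by rw [hdeg]; norm_num)
  simp [Polynomial.IsRoot] at hv
  exact ⟨v, by linear_combination hv⟩

open Polynomial in
lemma cubic_root (x y : ℂ) : ∃ u : ℂ, u ≠ 0 ∧ u^3 - x*u^2 + y*u - 1 = 0 := by
  have hdeg : (X^3 - C x * X^2 + C y * X - C 1 : ℂ[X]).degree = 3 := by compute_degree!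
  obtain ⟨u, hu⟩ := Complex.exists_root (f := X^3 - C x * X^2 + C y * X - C 1) (by rw [hdeg]; norm_num)
  simp [Polynomial.IsRoot] at hu
  refine ⟨u, ?_, by linear_combination hu⟩
  intro h; rw [h] at hu; norm_num at hu

lemma PhiA2_surj (x y : ℂ) : ∃ u v : ℂ, u ≠ 0 ∧ v ≠ 0 ∧ PhiA2 u v = (x, y) := by
  obtain ⟨u, hu0, hu⟩ := cubic_root x y
  obtain ⟨v, hv⟩ := quad_root (u - x) (u^2 - x*u + y)
  have hb : u * (u^2 - x*u + y) = 1 := by linear_combination hu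
  have hv0 : v ≠ 0 := by
    intro h; rw [h] at hv
    exact one_ne_zero (by linear_combination u * hv - hb : (1:ℂ) = 0)
  refine ⟨u, v, hu0, hv0, ?_⟩
  have hinvu : u⁻¹ = u^2 - x*u + y := inv_eq_of_mul_eq_one_right hb
  have hinvv : v⁻¹ = (x - u - v) * u :=
    inv_eq_of_mul_eq_one_right (by linear_combination hb - u * hv)
  unfold PhiA2
  refine Prod.ext ?_ ?_ <;> simp <;> rw [hinvu, hinvv]
  · linear_combination (x - u - v) * hb
  · ring

lemma PhiA2_swap (u v : ℂ) : PhiA2 u v = PhiA2 v u := by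
  unfold PhiA2; rw [mul_comm]; ring_nf

lemma PhiA2_rot (u v : ℂ) (hu : u ≠ 0) (hv : v ≠ 0) :
    PhiA2 u v = PhiA2 v (u * v)⁻¹ := by
  unfold PhiA2
  refine Prod.ext ?_ ?_ <;> simp <;> field_simp <;> ring

lemma key3 (A B C u v w : ℂ) (h1 : A + B + C = u + v + w)
    (h2 : A*B + A*C + B*C = u*v + u*w + v*w) (h3 : A*B*C = u*v*w) :
    (A - u) * (A - v) * (A - w) = 0 := by
  linear_combination A^2 * h1 - A * h2 + h3

lemma key2 (B C v w : ℂ) (h1 : B + C = v + w) (h2 : B*C = v*w) :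
    (B - v) * (B - w) = 0 := by
  linear_combination B * h1 - h2

lemma pow_pred_eq_one {z : ℂ} (hz : z ≠ 0) {n : ℕ} (hn : 1 ≤ n) (h : z^n = z) :
    z^(n-1) = 1 := by
  have h2 : z^(n-1) * z = 1 * z := by
    rw [← pow_succ, Nat.sub_add_cancel hn, h, one_mul]
  exact mul_right_cancel₀ hz h2

lemma pow_eq_self {z : ℂ} {n : ℕ} (hn : 1 ≤ n) (h : z^(n-1) = 1) : z^n = z := by
  have : n - 1 + 1 = n := by omega
  rw [← this, pow_succ, h, one_mul]

/-- the complex fixed points of a `q`-th folding polynomial pair of type `A₂`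
are given by `S₁ ∪ S₂ ∪ S₃`. -/
theorem stmt_6 (q : ℕ) (hq : IsPrimePow q) (f g : MvPolynomial (Fin 2) ℤ)
    (hfg : IsFoldingPairA2 q f g) :
    {xy : ℂ × ℂ | MvPolynomial.aeval ![xy.1, xy.2] f = xy.1
        ∧ MvPolynomial.aeval ![xy.1, xy.2] g = xy.2}
      = {xy : ℂ × ℂ | ∃ ζ ξ : ℂ, ζ ^ (q - 1) = 1 ∧ ξ ^ (q - 1) = 1 ∧ xy = PhiA2 ζ ξ}
        ∪ {xy : ℂ × ℂ | ∃ ζ : ℂ, ζ ^ (q ^ 2 - 1) = 1 ∧ xy = PhiA2 ζ (ζ ^ q)}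
        ∪ {xy : ℂ × ℂ | ∃ ζ : ℂ, ζ ^ (q ^ 2 + q + 1) = 1 ∧ xy = PhiA2 ζ (ζ ^ q)} := by
  have hq2 : 2 ≤ q := hq.two_le
  ext ⟨x, y⟩
  simp only [Set.mem_setOf_eq, Set.mem_union]
  constructor
  · rintro ⟨hf, hg⟩
    obtain ⟨u, v, hu0, hv0, hΦ⟩ := PhiA2_surj x y
    set w : ℂ := (u * v)⁻¹ with hw
    have hw0 : w ≠ 0 := inv_ne_zero (mul_ne_zero hu0 hv0)
    have huvw : u * v * w = 1 := mul_inv_cancel₀ (mul_ne_zero hu0 hv0)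
    -- fixed-point equation
    have h := hfg u v hu0 hv0
    rw [hΦ] at h
    simp only at h
    rw [hf, hg] at h
    have heq : PhiA2 (u^q) (v^q) = PhiA2 u v := by rw [← h, hΦ]
    -- extract symmetric function equalities
    have huq0 : u^q ≠ 0 := pow_ne_zero _ hu0
    have hvq0 : v^q ≠ 0 := pow_ne_zero _ hv0
    have hwq : w^q = (u^q * v^q)⁻¹ := by rw [hw, ← mul_pow, inv_pow]
    have huvwq : u^q * v^q * w^q = 1 := by
      rw [hw]; rw [← mul_pow, ← mul_pow, mul_inv_cancel₀ (mul_ne_zero hu0 hv0), one_pow]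
    have h1' := congrArg Prod.fst heq
    have h2' := congrArg Prod.snd heq
    simp only [PhiA2] at h1' h2'
    have hsum : u^q + v^q + w^q = u + v + w := by rw [hwq, hw]; exact h1'
    have hinvu : u⁻¹ = v * w := inv_eq_of_mul_eq_one_right (by linear_combination huvw)
    have hinvv : v⁻¹ = u * w := inv_eq_of_mul_eq_one_right (by linear_combination huvw)
    have hinvuq : (u^q)⁻¹ = v^q * w^q :=
      inv_eq_of_mul_eq_one_right (by linear_combination huvwq)
    have hinvvq : (v^q)⁻¹ = u^q * w^q :=
      inv_eq_of_mul_eq_one_right (by linear_combination huvwq)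
    rw [hinvu, hinvv, hinvuq, hinvvq] at h2'
    have hprod : u^q*v^q + u^q*w^q + v^q*w^q = u*v + u*w + v*w := by linear_combination h2'
    have hprod3 : u^q * v^q * w^q = u*v*w := by rw [huvwq, huvw]
    have hkey := key3 (u^q) (v^q) (w^q) u v w hsum hprod hprod3
    have hq2sq : 1 ≤ q^2 := by nlinarith
    rcases mul_eq_zero.mp hkey with h' | hc
    · rcases mul_eq_zero.mp h' with ha | hb
      · -- u^q = u
        have huq : u^q = u := sub_eq_zero.mp ha
        have h1c : v^q + w^q = v + w := by linear_combination hsum - huq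
        have h2c : v^q * w^q = v * w := by
          apply mul_left_cancel₀ hu0
          linear_combination hprod3 - v^q*w^q*huq
        rcases mul_eq_zero.mp (key2 (v^q) (w^q) v w h1c h2c) with hv' | hw'
        · -- v^q = v : S₁
          have hvq : v^q = v := sub_eq_zero.mp hv'
          exact Or.inl (Or.inl ⟨u, v, pow_pred_eq_one hu0 (by omega) huq,
            pow_pred_eq_one hv0 (by omega) hvq, hΦ.symm⟩)
        · -- v^q = w : S₂ with ζ = v
          have hvq : v^q = w := sub_eq_zero.mp hw'
          have hC : w^q = v := by linear_combination h1c - hvq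
          have hv2 : v^(q^2) = v := by rw [pow_two, pow_mul, hvq, hC]
          refine Or.inl (Or.inr ⟨v, pow_pred_eq_one hv0 hq2sq hv2, ?_⟩)
          rw [hvq, ← hΦ, hw]
          exact PhiA2_rot u v hu0 hv0
      · -- u^q = v
        have huq : u^q = v := sub_eq_zero.mp hb
        have h1c : v^q + w^q = u + w := by linear_combination hsum - huq
        have h2c : v^q * w^q = u * w := by
          apply mul_left_cancel₀ hv0
          linear_combination hprod3 - v^q*w^q*huq
        rcases mul_eq_zero.mp (key2 (v^q) (w^q) u w h1c h2c) with hv' | hw'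
        · -- v^q = u : S₂ with ζ = u
          have hvq : v^q = u := sub_eq_zero.mp hv'
          have hu2 : u^(q^2) = u := by rw [pow_two, pow_mul, huq, hvq]
          refine Or.inl (Or.inr ⟨u, pow_pred_eq_one hu0 hq2sq hu2, ?_⟩)
          rw [huq, ← hΦ]
        · -- v^q = w : S₃ with ζ = u
          have hvq : v^q = w := sub_eq_zero.mp hw'
          have hu2 : u^(q^2) = w := by rw [pow_two, pow_mul, huq, hvq]
          have hu3 : u^(q^2 + q + 1) = 1 := by
            rw [pow_add, pow_add, pow_one, hu2, huq]
            linear_combination huvw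
          refine Or.inr ⟨u, hu3, ?_⟩
          rw [huq, ← hΦ]
    · -- u^q = w
      have huq : u^q = w := sub_eq_zero.mp hc
      have h1c : v^q + w^q = u + v := by linear_combination hsum - huq
      have h2c : v^q * w^q = u * v := by
        apply mul_left_cancel₀ hw0
        linear_combination hprod3 - v^q*w^q*huq
      rcases mul_eq_zero.mp (key2 (v^q) (w^q) u v h1c h2c) with hv' | hw'
      · -- v^q = u : S₃ with ζ = w
        have hvq : v^q = u := sub_eq_zero.mp hv'
        have hC : w^q = v := by
          apply mul_left_cancel₀ hu0
          linear_combination h2c - w^q*hvq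
        have hw2 : w^(q^2) = u := by rw [pow_two, pow_mul, hC, hvq]
        have hw3 : w^(q^2 + q + 1) = 1 := by
          rw [pow_add, pow_add, pow_one, hw2, hC]
          linear_combination huvw
        refine Or.inr ⟨w, hw3, ?_⟩
        rw [hC, ← hΦ]
        rw [PhiA2_rot u v hu0 hv0, ← hw, PhiA2_swap]
      · -- v^q = v : S₂ with ζ = w
        have hvq : v^q = v := sub_eq_zero.mp hw'
        have hC : w^q = u := by linear_combination h1c - hvq
        have hw2 : w^(q^2) = w := by rw [pow_two, pow_mul, hC, huq]
        refine Or.inl (Or.inr ⟨w, pow_pred_eq_one hw0 hq2sq hw2, ?_⟩)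
        rw [hC, ← hΦ]
        have hvwu : (v * w)⁻¹ = u :=
          inv_eq_of_mul_eq_one_right (by linear_combination huvw)
        rw [PhiA2_rot u v hu0 hv0, ← hw, PhiA2_rot v w hv0 hw0, hvwu]
  · -- reverse inclusion
    have fix_of : ∀ a b : ℂ, a ≠ 0 → b ≠ 0 → PhiA2 (a^q) (b^q) = PhiA2 a b →
        ∀ hxy : (x, y) = PhiA2 a b,
        MvPolynomial.aeval ![x, y] f = x ∧ MvPolynomial.aeval ![x, y] g = y := by
      intro a b ha hb hper hxy
      have h := hfg a b ha hb
      rw [hper, ← hxy] at h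
      simp only at h
      exact ⟨congrArg Prod.fst h, congrArg Prod.snd h⟩
    rintro ((⟨ζ, ξ, hζ, hξ, hxy⟩ | ⟨ζ, hζ, hxy⟩) | ⟨ζ, hζ, hxy⟩)
    · have hζ0 : ζ ≠ 0 := by
        intro h; rw [h, zero_pow (by omega : q - 1 ≠ 0)] at hζ; exact zero_ne_one hζ
      have hξ0 : ξ ≠ 0 := by
        intro h; rw [h, zero_pow (by omega : q - 1 ≠ 0)] at hξ; exact zero_ne_one hξ
      exact fix_of ζ ξ hζ0 hξ0
        (by rw [pow_eq_self (by omega) hζ, pow_eq_self (by omega) hξ]) hxy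
    · have hζ0 : ζ ≠ 0 := by
        intro h; rw [h, zero_pow (Nat.sub_ne_zero_of_lt (by nlinarith : 1 < q^2))] at hζ
        exact zero_ne_one hζ
      have hζq : ζ^(q^2) = ζ := pow_eq_self (by nlinarith) hζ
      refine fix_of ζ (ζ^q) hζ0 (pow_ne_zero _ hζ0) ?_ hxy
      rw [← pow_mul, ← pow_two, hζq, PhiA2_swap]
    · have hζ0 : ζ ≠ 0 := by
        intro h; rw [h, zero_pow (by positivity : q^2 + q + 1 ≠ 0)] at hζ
        exact zero_ne_one hζ
      refine fix_of ζ (ζ^q) hζ0 (pow_ne_zero _ hζ0) ?_ hxy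
      have hinv : (ζ * ζ^q)⁻¹ = ζ^(q^2) := by
        apply inv_eq_of_mul_eq_one_right
        rw [show ζ * ζ^q * ζ^(q^2) = ζ^(q^2+q+1) by rw [pow_add, pow_add, pow_one]; ring, hζ]
      rw [← pow_mul, ← pow_two]
      rw [PhiA2_rot ζ (ζ^q) hζ0 (pow_ne_zero _ hζ0), hinv]
end

section
/- Let q be a power of a prime and let f, g ∈ ℤ[X,Y] be a q-th folding polynomial pair of type B₂. Then the set of fixed points {(x,y) ∈ ℂ² : f(x,y) = x and g(x,y) = y} equals the union S₁ ∪ S₂ ∪ S₃ ∪ S₄ ∪ S₅, where S₁ = {Φ_{B₂}(ζ,ξ) : ζ^{q-1} = 1, ξ^{q+1} = 1}, S₂ = {Φ_{B₂}(ζ,ξ) : ζ^{q-1} = ξ^{q-1} = 1}, S₃ = {Φ_{B₂}(ζ,ξ) : ζ^{q+1} = ξ^{q+1} = 1}, S₄ = {Φ_{B₂}(ζ, ζ^q) : ζ^{q²-1} = 1}, and S₅ = {Φ_{B₂}(ζ, ζ^q) : ζ^{q²+1} = 1}. -/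
/-- `Φ_{B₂}(u,v) = (u + u⁻¹ + v + v⁻¹, uv + (uv)⁻¹ + uv⁻¹ + u⁻¹v)`. -/
noncomputable def PhiB2 (u v : ℂ) : ℂ × ℂ :=
  (u + u⁻¹ + v + v⁻¹, u * v + (u * v)⁻¹ + u * v⁻¹ + u⁻¹ * v)

/-- `(f, g)` is a `k`-th folding polynomial pair of type `B₂`. -/
def IsFoldingPairB2 (k : ℕ) (f g : MvPolynomial (Fin 2) ℤ) : Prop :=
  ∀ u v : ℂ, u ≠ 0 → v ≠ 0 →
    (MvPolynomial.aeval ![(PhiB2 u v).1, (PhiB2 u v).2] f,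
     MvPolynomial.aeval ![(PhiB2 u v).1, (PhiB2 u v).2] g) = PhiB2 (u ^ k) (v ^ k)

lemma phiB2_eq (u v : ℂ) :
    PhiB2 u v = ((u + u⁻¹) + (v + v⁻¹), (u + u⁻¹) * (v + v⁻¹)) := by
  unfold PhiB2
  rw [mul_inv]
  exact Prod.ext (by ring) (by ring)

lemma phiB2_comm (u v : ℂ) : PhiB2 u v = PhiB2 v u := by
  rw [phiB2_eq, phiB2_eq]; exact Prod.ext (by ring) (by ring)

lemma phiB2_inv_right (u v : ℂ) : PhiB2 u v⁻¹ = PhiB2 u v := by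
  rw [phiB2_eq, phiB2_eq, inv_inv]; exact Prod.ext (by ring) (by ring)

lemma exists_addinv (a : ℂ) : ∃ u : ℂ, u ≠ 0 ∧ u + u⁻¹ = a := by
  obtain ⟨t, ht⟩ : ∃ t : ℂ, t ^ 2 = a ^ 2 - 4 :=
    IsAlgClosed.exists_pow_nat_eq _ (by norm_num)
  have hmul : ((a - t) / 2) * ((a + t) / 2) = 1 := by linear_combination -ht / 4
  have hu : (a + t) / 2 ≠ 0 := right_ne_zero_of_mul_eq_one hmul
  have hinv : ((a + t) / 2)⁻¹ = (a - t) / 2 := (eq_inv_of_mul_eq_one_left hmul).symm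
  exact ⟨(a + t) / 2, hu, by rw [hinv]; ring⟩

lemma phi_surj (x y : ℂ) : ∃ u : ℂ, u ≠ 0 ∧ ∃ v : ℂ, v ≠ 0 ∧ PhiB2 u v = (x, y) := by
  obtain ⟨s, hs⟩ : ∃ s : ℂ, s ^ 2 = x ^ 2 - 4 * y :=
    IsAlgClosed.exists_pow_nat_eq _ (by norm_num)
  obtain ⟨u, hu, hua⟩ := exists_addinv ((x + s) / 2)
  obtain ⟨v, hv, hvb⟩ := exists_addinv ((x - s) / 2)
  refine ⟨u, hu, v, hv, ?_⟩
  rw [phiB2_eq, hua, hvb]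
  exact Prod.ext (by ring) (by simp; linear_combination -hs/4)

lemma addinv_inj {u w : ℂ} (hu : u ≠ 0) (hw : w ≠ 0) (h : u + u⁻¹ = w + w⁻¹) :
    u = w ∨ u = w⁻¹ := by
  have key : (u - w) * (u * w - 1) = 0 := by
    field_simp at h
    linear_combination h
  rcases mul_eq_zero.1 key with h1 | h1
  · exact Or.inl (sub_eq_zero.1 h1)
  · exact Or.inr (eq_inv_of_mul_eq_one_left (by linear_combination h1))

lemma pair_eq {a b a' b' : ℂ} (h1 : a' + b' = a + b) (h2 : a' * b' = a * b) :
    (a' = a ∧ b' = b) ∨ (a' = b ∧ b' = a) := by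
  have key : (a' - a) * (a' - b) = 0 := by linear_combination a' * h1 - h2
  rcases mul_eq_zero.1 key with h3 | h3
  · exact Or.inl ⟨by linear_combination h3, by linear_combination h1 - h3⟩
  · exact Or.inr ⟨by linear_combination h3, by linear_combination h1 - h3⟩

lemma phi_eq_cases {u v u' v' : ℂ} (hu : u ≠ 0) (hv : v ≠ 0) (hu' : u' ≠ 0) (hv' : v' ≠ 0)
    (h : PhiB2 u' v' = PhiB2 u v) :
    ((u' = u ∨ u' = u⁻¹) ∧ (v' = v ∨ v' = v⁻¹)) ∨
    ((u' = v ∨ u' = v⁻¹) ∧ (v' = u ∨ v' = u⁻¹)) := by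
  rw [phiB2_eq, phiB2_eq, Prod.ext_iff] at h
  obtain ⟨h1, h2⟩ := h
  rcases pair_eq h1 h2 with ⟨ha, hb⟩ | ⟨ha, hb⟩
  · exact Or.inl ⟨addinv_inj hu' hu ha, addinv_inj hv' hv hb⟩
  · exact Or.inr ⟨addinv_inj hu' hv ha, addinv_inj hv' hu hb⟩

lemma pow_pred_iff {z : ℂ} (hz : z ≠ 0) {n : ℕ} (hn : 1 ≤ n) :
    z ^ (n - 1) = 1 ↔ z ^ n = z := by
  have h : z ^ (n - 1) * z = z ^ n := by
    rw [← pow_succ]; congr 1; omega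
  constructor
  · intro h1; rw [← h, h1, one_mul]
  · intro h1; rw [h1] at h
    exact mul_right_cancel₀ hz (by rw [h, one_mul])

lemma pow_succ_iff {z : ℂ} (hz : z ≠ 0) {n : ℕ} :
    z ^ (n + 1) = 1 ↔ z ^ n = z⁻¹ := by
  rw [pow_succ]
  constructor
  · intro h1; exact eq_inv_of_mul_eq_one_left h1
  · intro h1; rw [h1, inv_mul_cancel₀ hz]

lemma ne_zero_of_pow_eq_one {z : ℂ} {n : ℕ} (hn : n ≠ 0) (h : z ^ n = 1) : z ≠ 0 := by
  rintro rfl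
  simp [zero_pow hn] at h

/-- the complex fixed points of a `q`-th folding polynomial pair of type `B₂`
are given by `S₁ ∪ S₂ ∪ S₃ ∪ S₄ ∪ S₅`. -/
theorem stmt_9 (q : ℕ) (hq : IsPrimePow q) (f g : MvPolynomial (Fin 2) ℤ)
    (hfg : IsFoldingPairB2 q f g) :
    {xy : ℂ × ℂ | MvPolynomial.aeval ![xy.1, xy.2] f = xy.1
        ∧ MvPolynomial.aeval ![xy.1, xy.2] g = xy.2}
      = {xy : ℂ × ℂ | ∃ ζ ξ : ℂ, ζ ^ (q - 1) = 1 ∧ ξ ^ (q + 1) = 1 ∧ xy = PhiB2 ζ ξ}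
        ∪ {xy : ℂ × ℂ | ∃ ζ ξ : ℂ, ζ ^ (q - 1) = 1 ∧ ξ ^ (q - 1) = 1 ∧ xy = PhiB2 ζ ξ}
        ∪ {xy : ℂ × ℂ | ∃ ζ ξ : ℂ, ζ ^ (q + 1) = 1 ∧ ξ ^ (q + 1) = 1 ∧ xy = PhiB2 ζ ξ}
        ∪ {xy : ℂ × ℂ | ∃ ζ : ℂ, ζ ^ (q ^ 2 - 1) = 1 ∧ xy = PhiB2 ζ (ζ ^ q)}
        ∪ {xy : ℂ × ℂ | ∃ ζ : ℂ, ζ ^ (q ^ 2 + 1) = 1 ∧ xy = PhiB2 ζ (ζ ^ q)} := by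
  have hq2 : 2 ≤ q := hq.two_le
  have hq1 : 1 ≤ q := by omega
  have hqsq : 1 ≤ q ^ 2 := Nat.one_le_pow _ _ (by omega)
  have hq4 : 4 ≤ q ^ 2 := by nlinarith
  have hsub : q ^ 2 - 1 ≠ 0 := Nat.sub_ne_zero_of_lt (by omega)
  ext ⟨x, y⟩
  simp only [Set.mem_union, Set.mem_setOf_eq]
  constructor
  · rintro ⟨hf, hg⟩
    obtain ⟨u, hu, v, hv, huv⟩ := phi_surj x y
    have hfix : PhiB2 (u ^ q) (v ^ q) = PhiB2 u v := by
      have h := hfg u v hu hv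
      rw [huv] at h
      simp only at h
      rw [hf, hg] at h
      rw [← h, huv]
    have huq : u ^ q ≠ 0 := pow_ne_zero _ hu
    have hvq : v ^ q ≠ 0 := pow_ne_zero _ hv
    have hqq : (u ^ q) ^ q = u ^ (q ^ 2) := by rw [← pow_mul, sq]
    rcases phi_eq_cases hu hv huq hvq hfix with ⟨h1 | h1, h2 | h2⟩ | ⟨h1 | h1, h2 | h2⟩
    · -- u^q = u, v^q = v : S₂
      exact Or.inl (Or.inl (Or.inl (Or.inr ⟨u, v, (pow_pred_iff hu hq1).2 h1,
        (pow_pred_iff hv hq1).2 h2, huv.symm⟩)))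
    · -- u^q = u, v^q = v⁻¹ : S₁
      exact Or.inl (Or.inl (Or.inl (Or.inl ⟨u, v, (pow_pred_iff hu hq1).2 h1,
        (pow_succ_iff hv).2 h2, huv.symm⟩)))
    · -- u^q = u⁻¹, v^q = v : S₁ swapped
      exact Or.inl (Or.inl (Or.inl (Or.inl ⟨v, u, (pow_pred_iff hv hq1).2 h2,
        (pow_succ_iff hu).2 h1, by rw [← huv, phiB2_comm]⟩)))
    · -- both inverse : S₃
      exact Or.inl (Or.inl (Or.inr ⟨u, v, (pow_succ_iff hu).2 h1,
        (pow_succ_iff hv).2 h2, huv.symm⟩))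
    · -- u^q = v, v^q = u : S₄
      refine Or.inl (Or.inr ⟨u, (pow_pred_iff hu hqsq).2 ?_, by rw [← huv, h1]⟩)
      rw [← hqq, h1, h2]
    · -- u^q = v, v^q = u⁻¹ : S₅
      refine Or.inr ⟨u, (pow_succ_iff hu).2 ?_, by rw [← huv, h1]⟩
      rw [← hqq, h1, h2]
    · -- u^q = v⁻¹, v^q = u : S₅
      have hvval : v = (u ^ q)⁻¹ := by rw [h1, inv_inv]
      refine Or.inr ⟨u, (pow_succ_iff hu).2 ?_, ?_⟩
      · have h3 : (u ^ (q ^ 2))⁻¹ = u := by rw [← hqq, ← inv_pow, ← hvval, h2]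
        exact inv_eq_iff_eq_inv.1 h3
      · rw [← huv, hvval, phiB2_inv_right]
    · -- u^q = v⁻¹, v^q = u⁻¹ : S₄
      have hvval : v = (u ^ q)⁻¹ := by rw [h1, inv_inv]
      refine Or.inl (Or.inr ⟨u, (pow_pred_iff hu hqsq).2 ?_, ?_⟩)
      · have h3 : (u ^ (q ^ 2))⁻¹ = u⁻¹ := by rw [← hqq, ← inv_pow, ← hvval, h2]
        exact inv_inj.1 h3
      · rw [← huv, hvval, phiB2_inv_right]
  · -- backward direction
    have key : ∀ u v : ℂ, u ≠ 0 → v ≠ 0 → PhiB2 (u ^ q) (v ^ q) = PhiB2 u v →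
        (x, y) = PhiB2 u v →
        MvPolynomial.aeval ![x, y] f = x ∧ MvPolynomial.aeval ![x, y] g = y := by
      intro u v hu hv hpow hxy
      have h := hfg u v hu hv
      rw [hpow, ← hxy] at h
      exact ⟨congrArg Prod.fst h, congrArg Prod.snd h⟩
    rintro ((((⟨ζ, ξ, hζ, hξ, hxy⟩ | ⟨ζ, ξ, hζ, hξ, hxy⟩) | ⟨ζ, ξ, hζ, hξ, hxy⟩) |
      ⟨ζ, hζ, hxy⟩) | ⟨ζ, hζ, hxy⟩)
    · have hz : ζ ≠ 0 := ne_zero_of_pow_eq_one (by omega) hζ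
      have hx : ξ ≠ 0 := ne_zero_of_pow_eq_one (by omega) hξ
      refine key ζ ξ hz hx ?_ hxy
      rw [(pow_pred_iff hz hq1).1 hζ, (pow_succ_iff hx).1 hξ, phiB2_inv_right]
    · have hz : ζ ≠ 0 := ne_zero_of_pow_eq_one (by omega) hζ
      have hx : ξ ≠ 0 := ne_zero_of_pow_eq_one (by omega) hξ
      refine key ζ ξ hz hx ?_ hxy
      rw [(pow_pred_iff hz hq1).1 hζ, (pow_pred_iff hx hq1).1 hξ]
    · have hz : ζ ≠ 0 := ne_zero_of_pow_eq_one (by omega) hζ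
      have hx : ξ ≠ 0 := ne_zero_of_pow_eq_one (by omega) hξ
      refine key ζ ξ hz hx ?_ hxy
      rw [(pow_succ_iff hz).1 hζ, (pow_succ_iff hx).1 hξ, phiB2_inv_right,
        phiB2_comm, phiB2_inv_right, phiB2_comm]
    · have hz : ζ ≠ 0 := ne_zero_of_pow_eq_one hsub hζ
      have hzq : ζ ^ q ≠ 0 := pow_ne_zero _ hz
      refine key ζ (ζ ^ q) hz hzq ?_ hxy
      have : (ζ ^ q) ^ q = ζ := by
        rw [← pow_mul, ← sq]
        exact (pow_pred_iff hz hqsq).1 hζ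
      rw [this, phiB2_comm]
    · have hz : ζ ≠ 0 := ne_zero_of_pow_eq_one (Nat.succ_ne_zero _) hζ
      have hzq : ζ ^ q ≠ 0 := pow_ne_zero _ hz
      refine key ζ (ζ ^ q) hz hzq ?_ hxy
      have : (ζ ^ q) ^ q = ζ⁻¹ := by
        rw [← pow_mul, ← sq]
        exact (pow_succ_iff hz).1 hζ
      rw [this, phiB2_comm ζ, phiB2_inv_right, phiB2_comm]
end

section
/- Let u, v, ũ, ṽ be complex numbers of absolute value 1. Then Φ_{A₂}(u,v) = Φ_{A₂}(ũ,ṽ) if and only if the pair (ũ,ṽ) is one of the six pairs (u,v), (v,u), (u,(uv)⁻¹), ((uv)⁻¹,u), (v,(uv)⁻¹), ((uv)⁻¹,v). -/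
/-! With `w = (uv)⁻¹`, the two coordinates of `Φ_{A₂}(u,v)` are the first two elementary
symmetric functions of `u, v, w`, and the third one is `uvw = 1`. So `Φ_{A₂}(u,v)` determines
the cubic `(X - u)(X - v)(X - w)`, hence the triple `(u, v, w)` up to order. Conversely, the six
orderings are reached by swapping the arguments of `Φ_{A₂}` and by `v ↦ (uv)⁻¹`. -/

section Vieta

variable {R : Type*} [CommRing R] [IsDomain R]

theorem eq_and_eq_or_eq_and_eq_of_add_eq_of_mul_eq {a b c d : R} (hs : c + d = a + b)
    (hp : c * d = a * b) : (c = a ∧ d = b) ∨ (c = b ∧ d = a) := by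
  have h : (c - a) * (c - b) = 0 := by linear_combination c * hs - hp
  rcases mul_eq_zero.1 h with h | h
  · have hca : c = a := sub_eq_zero.1 h
    exact Or.inl ⟨hca, by linear_combination hs - hca⟩
  · have hcb : c = b := sub_eq_zero.1 h
    exact Or.inr ⟨hcb, by linear_combination hs - hcb⟩

theorem triple_perm_of_esymm_eq {a b c a' b' c' : R} (h₁ : a' + b' + c' = a + b + c)
    (h₂ : a' * b' + a' * c' + b' * c' = a * b + a * c + b * c) (h₃ : a' * b' * c' = a * b * c) :
    (a', b', c') = (a, b, c) ∨ (a', b', c') = (b, a, c) ∨ (a', b', c') = (a, c, b)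
      ∨ (a', b', c') = (c, a, b) ∨ (a', b', c') = (b, c, a) ∨ (a', b', c') = (c, b, a) := by
  have ha' : a' = a ∨ a' = b ∨ a' = c := by
    have hroot : (a' - a) * (a' - b) * (a' - c) = 0 := by
      linear_combination a' ^ 2 * h₁ - a' * h₂ + h₃
    simpa only [mul_eq_zero, sub_eq_zero, or_assoc] using hroot
  -- once `a'` is placed, `b'` and `c'` have the sum and product of the two remaining elements
  rcases ha' with rfl | rfl | rfl
  · obtain ⟨rfl, rfl⟩ | ⟨rfl, rfl⟩ :=
      eq_and_eq_or_eq_and_eq_of_add_eq_of_mul_eq (a := b) (b := c) (c := b') (d := c')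
        (by linear_combination h₁) (by linear_combination h₂ - a' * h₁) <;> simp
  · obtain ⟨rfl, rfl⟩ | ⟨rfl, rfl⟩ :=
      eq_and_eq_or_eq_and_eq_of_add_eq_of_mul_eq (a := a) (b := c) (c := b') (d := c')
        (by linear_combination h₁) (by linear_combination h₂ - a' * h₁) <;> simp
  · obtain ⟨rfl, rfl⟩ | ⟨rfl, rfl⟩ :=
      eq_and_eq_or_eq_and_eq_of_add_eq_of_mul_eq (a := a) (b := b) (c := b') (d := c')
        (by linear_combination h₁) (by linear_combination h₂ - a' * h₁) <;> simp

end Vieta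

namespace PhiA2

theorem eq_esymm {u v : ℂ} (hu : u ≠ 0) (hv : v ≠ 0) :
    PhiA2 u v = (u + v + (u * v)⁻¹, u * v + u * (u * v)⁻¹ + v * (u * v)⁻¹) := by
  simp only [PhiA2, Prod.mk.injEq, true_and]
  field_simp
  ring

theorem swap (u v : ℂ) : PhiA2 v u = PhiA2 u v := by
  simp only [PhiA2, Prod.mk.injEq]
  constructor <;> ring

theorem inv_mul_right {u : ℂ} (hu : u ≠ 0) (v : ℂ) : PhiA2 u (u * v)⁻¹ = PhiA2 u v := by
  have hw : u * (u * v)⁻¹ = v⁻¹ := by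
    rw [mul_inv, ← mul_assoc, mul_inv_cancel₀ hu, one_mul]
  simp only [PhiA2, hw, inv_inv, Prod.mk.injEq]
  constructor <;> ring

theorem inv_mul_left {v : ℂ} (hv : v ≠ 0) (u : ℂ) : PhiA2 v (u * v)⁻¹ = PhiA2 u v := by
  rw [mul_comm, inv_mul_right hv, swap]

end PhiA2

/-- for unimodular `u, v, ũ, ṽ`, `Φ_{A₂}(u,v) = Φ_{A₂}(ũ,ṽ)` iff `(ũ,ṽ)`
is one of the six pairs `(u,v), (v,u), (u,(uv)⁻¹), ((uv)⁻¹,u), (v,(uv)⁻¹), ((uv)⁻¹,v)`. -/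
theorem stmt_14 (u v ut vt : ℂ) (hu : ‖u‖ = 1) (hv : ‖v‖ = 1)
    (hut : ‖ut‖ = 1) (hvt : ‖vt‖ = 1) :
    PhiA2 u v = PhiA2 ut vt ↔
      (ut, vt) = (u, v) ∨ (ut, vt) = (v, u) ∨ (ut, vt) = (u, (u * v)⁻¹)
        ∨ (ut, vt) = ((u * v)⁻¹, u) ∨ (ut, vt) = (v, (u * v)⁻¹)
        ∨ (ut, vt) = ((u * v)⁻¹, v) := by
  have hu0 : u ≠ 0 := ne_zero_of_norm_ne_zero (hu ▸ one_ne_zero)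
  have hv0 : v ≠ 0 := ne_zero_of_norm_ne_zero (hv ▸ one_ne_zero)
  have hut0 : ut ≠ 0 := ne_zero_of_norm_ne_zero (hut ▸ one_ne_zero)
  have hvt0 : vt ≠ 0 := ne_zero_of_norm_ne_zero (hvt ▸ one_ne_zero)
  constructor
  · intro h
    rw [PhiA2.eq_esymm hu0 hv0, PhiA2.eq_esymm hut0 hvt0, Prod.mk.injEq] at h
    have h₃ : ut * vt * (ut * vt)⁻¹ = u * v * (u * v)⁻¹ := by
      rw [mul_inv_cancel₀ (mul_ne_zero hu0 hv0), mul_inv_cancel₀ (mul_ne_zero hut0 hvt0)]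
    have hperm := triple_perm_of_esymm_eq h.1.symm h.2.symm h₃
    simp only [Prod.mk.injEq] at hperm ⊢
    tauto
  · rintro (h | h | h | h | h | h) <;> rw [(Prod.mk.inj h).1, (Prod.mk.inj h).2] <;> symm
    · exact PhiA2.swap u v
    · exact PhiA2.inv_mul_right hu0 v
    · exact (PhiA2.swap u _).trans (PhiA2.inv_mul_right hu0 v)
    · exact PhiA2.inv_mul_left hv0 u
    · exact (PhiA2.swap v _).trans (PhiA2.inv_mul_left hv0 u)
end

section
/- Let u, v, ũ, ṽ be complex numbers of absolute value 1. Then Φ_{G₂}(u,v) = Φ_{G₂}(ũ,ṽ) if and only if the pair (ũ,ṽ) is one of the twelve pairs (u,v), (v,u), (u⁻¹,v⁻¹), (v⁻¹,u⁻¹), (u,(uv)⁻¹), ((uv)⁻¹,u), (v,(uv)⁻¹), ((uv)⁻¹,v), (u⁻¹,uv), (uv,u⁻¹), (v⁻¹,uv), (uv,v⁻¹). -/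
/-! With `w = (uv)⁻¹`, so that `uvw = 1`, put `e₁ = u + v + w` and
`e₂ = uv + vw + wu = u⁻¹ + v⁻¹ + w⁻¹`. Then `Φ_{G₂}(u,v) = (e₁ + e₂, e₁e₂ - 3)`, so the value of
`Φ_{G₂}` determines the unordered pair `{e₁, e₂}`. Since `e₃ = uvw = 1`, the pair `(e₁, e₂)` determines
the multiset `{u, v, w}` as the roots of `X³ - e₁X² + e₂X - 1`, and swapping `e₁, e₂` replaces it by
`{u⁻¹, v⁻¹, w⁻¹}`. The twelve pairs are the ordered pairs of entries, in distinct positions, of these two triples. -/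

/-- `Φ_{G₂}(u,v) = (u + v + uv + u⁻¹ + v⁻¹ + (uv)⁻¹,
u²v + uv² + uv⁻¹ + u⁻²v⁻¹ + u⁻¹v⁻² + u⁻¹v)`. -/
noncomputable def PhiG2 (u v : ℂ) : ℂ × ℂ :=
  (u + v + u * v + u⁻¹ + v⁻¹ + (u * v)⁻¹,
   u ^ 2 * v + u * v ^ 2 + u * v⁻¹ + (u ^ 2)⁻¹ * v⁻¹ + u⁻¹ * (v ^ 2)⁻¹ + u⁻¹ * v)

section Symmetric

variable {R : Type*} [CommRing R] [IsDomain R]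

theorem eq_or_eq_of_esymm_eq_of_eq {a b c x y z : R} (h₁ : x + y + z = a + b + c)
    (h₂ : x * y + y * z + z * x = a * b + b * c + c * a) (hx : x = a) : y = b ∨ y = c := by
  subst x
  have : (y - b) * (y - c) = 0 := by linear_combination (y + a) * h₁ - h₂
  exact (mul_eq_zero.mp this).imp sub_eq_zero.mp sub_eq_zero.mp

theorem pair_eq_of_esymm_eq {a b c x y z : R} (h₁ : x + y + z = a + b + c)
    (h₂ : x * y + y * z + z * x = a * b + b * c + c * a) (h₃ : x * y * z = a * b * c) :
    (x, y) = (a, b) ∨ (x, y) = (b, a) ∨ (x, y) = (a, c) ∨ (x, y) = (c, a) ∨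
      (x, y) = (b, c) ∨ (x, y) = (c, b) := by
  have hx : (x - a) * (x - b) * (x - c) = 0 := by
    linear_combination x ^ 2 * h₁ - x * h₂ + h₃
  simp only [Prod.mk.injEq, mul_eq_zero, sub_eq_zero] at hx ⊢
  rcases hx with (hx | hx) | hx
  · have := eq_or_eq_of_esymm_eq_of_eq h₁ h₂ hx
    tauto
  · have := eq_or_eq_of_esymm_eq_of_eq (y := y) (z := z) (a := b) (b := a) (c := c)
      (by linear_combination h₁) (by linear_combination h₂) hx
    tauto
  · have := eq_or_eq_of_esymm_eq_of_eq (y := y) (z := z) (a := c) (b := a) (c := b)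
      (by linear_combination h₁) (by linear_combination h₂) hx
    tauto

end Symmetric

theorem pair_eq_of_esymm_eq_of_mul_eq_one {K : Type*} [Field K] {a b c x y : K}
    (hx : x ≠ 0) (hy : y ≠ 0) (habc : a * b * c = 1) (h₁ : x + y + (x * y)⁻¹ = a + b + c)
    (h₂ : x⁻¹ + y⁻¹ + x * y = a * b + b * c + c * a) :
    (x, y) = (a, b) ∨ (x, y) = (b, a) ∨ (x, y) = (a, c) ∨ (x, y) = (c, a) ∨
      (x, y) = (b, c) ∨ (x, y) = (c, b) := by
  refine pair_eq_of_esymm_eq (z := (x * y)⁻¹) h₁ ?_ ?_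
  · rw [← h₂]
    field_simp
    ring
  · rw [habc]
    field_simp

theorem PhiG2_eq_add_mul_sub_three {u v : ℂ} (hu : u ≠ 0) (hv : v ≠ 0) :
    PhiG2 u v = ((u + v + (u * v)⁻¹) + (u⁻¹ + v⁻¹ + u * v),
      (u + v + (u * v)⁻¹) * (u⁻¹ + v⁻¹ + u * v) - 3) := by
  simp only [PhiG2, Prod.mk.injEq]
  constructor
  · ring
  · field_simp
    ring

/-- for unimodular `u, v, ũ, ṽ`, `Φ_{G₂}(u,v) = Φ_{G₂}(ũ,ṽ)` iff `(ũ,ṽ)`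
is one of the twelve pairs `(u,v), (v,u), (u⁻¹,v⁻¹), (v⁻¹,u⁻¹), (u,(uv)⁻¹), ((uv)⁻¹,u),
(v,(uv)⁻¹), ((uv)⁻¹,v), (u⁻¹,uv), (uv,u⁻¹), (v⁻¹,uv), (uv,v⁻¹)`. -/
theorem stmt_16 (u v ut vt : ℂ) (hu : ‖u‖ = 1) (hv : ‖v‖ = 1)
    (hut : ‖ut‖ = 1) (hvt : ‖vt‖ = 1) :
    PhiG2 u v = PhiG2 ut vt ↔
      (ut, vt) = (u, v) ∨ (ut, vt) = (v, u) ∨ (ut, vt) = (u⁻¹, v⁻¹) ∨ (ut, vt) = (v⁻¹, u⁻¹)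
        ∨ (ut, vt) = (u, (u * v)⁻¹) ∨ (ut, vt) = ((u * v)⁻¹, u)
        ∨ (ut, vt) = (v, (u * v)⁻¹) ∨ (ut, vt) = ((u * v)⁻¹, v)
        ∨ (ut, vt) = (u⁻¹, u * v) ∨ (ut, vt) = (u * v, u⁻¹)
        ∨ (ut, vt) = (v⁻¹, u * v) ∨ (ut, vt) = (u * v, v⁻¹) := by
  have hu0 : u ≠ 0 := norm_ne_zero_iff.mp (by simp [hu])
  have hv0 : v ≠ 0 := norm_ne_zero_iff.mp (by simp [hv])
  have hut0 : ut ≠ 0 := norm_ne_zero_iff.mp (by simp [hut])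
  have hvt0 : vt ≠ 0 := norm_ne_zero_iff.mp (by simp [hvt])
  constructor
  · rw [PhiG2_eq_add_mul_sub_three hu0 hv0, PhiG2_eq_add_mul_sub_three hut0 hvt0, Prod.mk.injEq]
    rintro ⟨hsum, hprod⟩
    rcases eq_and_eq_or_eq_and_eq_of_add_eq_of_mul_eq hsum.symm
      (by linear_combination hprod.symm) with ⟨h₁, h₂⟩ | ⟨h₁, h₂⟩
    · have := pair_eq_of_esymm_eq_of_mul_eq_one hut0 hvt0 (c := (u * v)⁻¹)
        (by field_simp) h₁ (by rw [h₂]; field_simp; ring)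
      tauto
    · have := pair_eq_of_esymm_eq_of_mul_eq_one hut0 hvt0 (a := u⁻¹) (b := v⁻¹) (c := u * v)
        (by field_simp) h₁ (by rw [h₂]; field_simp; ring)
      tauto
  · rintro (h | h | h | h | h | h | h | h | h | h | h | h) <;>
      obtain ⟨rfl, rfl⟩ := Prod.mk.inj h <;>
      simp only [PhiG2, Prod.mk.injEq] <;>
      constructor <;> field_simp <;> ring
end

section
/- Let a be a positive integer. The set {(ζ + ξ + (ζξ)⁻¹, ζ⁻¹ + ξ⁻¹ + ζξ) : ζ, ξ ∈ ℂ, ζ^a = ξ^a = 1} ⊆ ℂ² has exactly (a² + 3a + 2·gcd(a,3))/6 elements. -/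
/-!
Write `μ` for the `a`-th roots of unity. The map `(ζ, ξ) ↦ (ζ, ξ, (ζξ)⁻¹)` identifies `μ²` with the
triples in `μ³` of product `1`, and the point attached to `(ζ, ξ)` is `(e₁, e₂)` of that triple,
because `e₂ = ∑ vᵢ⁻¹` once `e₃ = 1`. By Vieta, `(e₁, e₂)` determines the multiset of the triple,
that is, its `S₃`-orbit, so the set has as many points as there are orbits. Burnside's lemma counts
them: the identity fixes `a²` triples, each transposition fixes the `a` triples `(x, x, x⁻²)`, and
each 3-cycle fixes the `gcd(a, 3)` triples `(x, x, x)` with `x³ = 1`.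
-/

open Finset Equiv MulAction Polynomial

theorem Fintype.exists_perm_comp_eq_of_map_univ_eq {ι α : Type*} [Fintype ι] {f g : ι → α}
    (h : univ.val.map f = univ.val.map g) : ∃ σ : Perm ι, g ∘ σ = f := by
  classical
  have hcount (u : ι → α) (c : α) : Fintype.card {i // u i = c} = (univ.val.map u).count c := by
    rw [Fintype.card_subtype, Multiset.count_map, ← filter_val, ← card_val]
    simp only [eq_comm]
  have hfib (c : α) : Fintype.card {i // f i = c} = Fintype.card {i // g i = c} := by
    rw [hcount, hcount, h]
  exact ⟨ofFiberEquiv fun c => Fintype.equivOfCardEq (hfib c), funext (ofFiberEquiv_map _)⟩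

theorem prod_X_sub_C_fin_three_of_prod_eq_one {K : Type*} [Field K] {v : Fin 3 → K}
    (hv : ∏ i, v i = 1) :
    ∏ i, (X - C (v i)) = X ^ 3 - C (∑ i, v i) * X ^ 2 + C (∑ i, (v i)⁻¹) * X - 1 := by
  rw [Fin.prod_univ_three] at hv
  have h0 : (v 0)⁻¹ = v 1 * v 2 := inv_eq_of_mul_eq_one_right (by rw [← hv, mul_assoc])
  have h1 : (v 1)⁻¹ = v 0 * v 2 := inv_eq_of_mul_eq_one_right (by rw [← hv]; ring)
  have h2 : (v 2)⁻¹ = v 0 * v 1 := inv_eq_of_mul_eq_one_right (by rw [← hv]; ring)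
  rw [← C_1, ← hv]
  simp only [Fin.prod_univ_three, Fin.sum_univ_three, h0, h1, h2, map_add, map_mul]
  ring

theorem map_univ_eq_of_sum_eq_of_sum_inv_eq {K : Type*} [Field K] {v w : Fin 3 → K}
    (hv : ∏ i, v i = 1) (hw : ∏ i, w i = 1) (hs : ∑ i, v i = ∑ i, w i)
    (hs' : ∑ i, (v i)⁻¹ = ∑ i, (w i)⁻¹) : univ.val.map v = univ.val.map w := by
  have hroots (u : Fin 3 → K) : (∏ i, (X - C (u i))).roots = univ.val.map u := by
    rw [← roots_multiset_prod_X_sub_C (univ.val.map u), Multiset.map_map]; rfl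
  rw [← hroots, ← hroots, prod_X_sub_C_fin_three_of_prod_eq_one hv,
    prod_X_sub_C_fin_three_of_prod_eq_one hw, hs, hs']

theorem MulAction.sum_natCard_fixedBy_eq_natCard_orbits_mul_natCard (G α : Type*) [Group G]
    [MulAction G α] [Fintype G] [Finite α] :
    ∑ g : G, Nat.card (fixedBy α g) = Nat.card (Quotient (orbitRel G α)) * Nat.card G := by
  classical
  have := Fintype.ofFinite α
  simp only [Nat.card_eq_fintype_card]
  exact sum_card_fixedBy_eq_card_orbits_mul_card_group G α

theorem MulAction.natCard_fixedBy_conj {G : Type*} (α : Type*) [Group G] [MulAction G α]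
    (g h : G) : Nat.card (fixedBy α (h * g * h⁻¹)) = Nat.card (fixedBy α g) := by
  rw [← smul_fixedBy, Set.natCard_smul_set]

theorem Equiv.Perm.sum_fin_three {M : Type*} [AddCommMonoid M] (f : Perm (Fin 3) → M) :
    ∑ σ, f σ = f 1 + (f (swap 0 1) + f (swap 0 2) + f (swap 1 2))
      + (f (finRotate 3) + f ((finRotate 3)⁻¹)) := by
  have huniv : (univ : Finset (Perm (Fin 3))) =
      {1, swap 0 1, swap 0 2, swap 1 2, finRotate 3, (finRotate 3)⁻¹} := by decide
  rw [huniv, sum_insert (by decide), sum_insert (by decide), sum_insert (by decide),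
    sum_insert (by decide), sum_pair (by decide)]
  abel

def ProdOneTuple (ι M : Type*) [Fintype ι] [CommMonoid M] : Type _ := {v : ι → M // ∏ i, v i = 1}

namespace ProdOneTuple

section CommMonoid

variable {ι M : Type*} [Fintype ι] [CommMonoid M]

@[ext]
theorem ext {v w : ProdOneTuple ι M} (h : ∀ i, v.1 i = w.1 i) : v = w :=
  Subtype.ext (funext h)

instance : MulAction (Perm ι) (ProdOneTuple ι M) where
  smul σ v := ⟨v.1 ∘ σ.symm, (σ.symm.prod_comp v.1).trans v.2⟩
  one_smul _ := rfl
  mul_smul _ _ _ := rfl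

theorem smul_apply (σ : Perm ι) (v : ProdOneTuple ι M) (i : ι) : (σ • v).1 i = v.1 (σ.symm i) :=
  rfl

theorem smul_eq_self_iff {σ : Perm ι} {v : ProdOneTuple ι M} :
    σ • v = v ↔ ∀ i, v.1 (σ i) = v.1 i := by
  refine ⟨fun h i => ?_, fun h => ext fun i => ?_⟩
  · rw [← congrFun (congrArg Subtype.val h) (σ i), smul_apply, symm_apply_apply]
  · rw [smul_apply, ← h, apply_symm_apply]

instance [Finite M] : Finite (ProdOneTuple ι M) :=
  inferInstanceAs (Finite (Subtype _))

end CommMonoid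

section CommGroup

variable {G : Type*} [CommGroup G]

def ofPair (x y : G) : ProdOneTuple (Fin 3) G :=
  ⟨![x, y, (x * y)⁻¹], by simp [Fin.prod_univ_three]⟩

theorem ofPair_eq {x y : G} {v : ProdOneTuple (Fin 3) G} (h0 : v.1 0 = x) (h1 : v.1 1 = y) :
    ofPair x y = v := by
  have h2 : v.1 2 = (x * y)⁻¹ :=
    eq_inv_of_mul_eq_one_right (by simpa [Fin.prod_univ_three, h0, h1] using v.2)
  ext i; fin_cases i <;> simp [ofPair, h0, h1, h2]

def equivProd : ProdOneTuple (Fin 3) G ≃ G × G where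
  toFun v := (v.1 0, v.1 1)
  invFun p := ofPair p.1 p.2
  left_inv _ := ofPair_eq rfl rfl
  right_inv _ := rfl

theorem mem_fixedBy_swap_iff {v : ProdOneTuple (Fin 3) G} :
    v ∈ fixedBy _ (swap (0 : Fin 3) 1) ↔ v.1 1 = v.1 0 := by
  rw [mem_fixedBy, smul_eq_self_iff]
  refine ⟨fun h => by simpa using h 0, fun h i => ?_⟩
  fin_cases i <;> simp [h, swap_apply_of_ne_of_ne]

theorem mem_fixedBy_finRotate_iff {v : ProdOneTuple (Fin 3) G} :
    v ∈ fixedBy _ (finRotate 3) ↔ v.1 1 = v.1 0 ∧ v.1 2 = v.1 0 := by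
  rw [mem_fixedBy, smul_eq_self_iff]
  refine ⟨fun h => ?_, fun ⟨h1, h2⟩ i => ?_⟩
  · have h0 : v.1 1 = v.1 0 := by simpa using h 0
    exact ⟨h0, by simpa [h0] using h 1⟩
  · fin_cases i <;> simp [h1, h2]

def fixedBySwapEquiv : fixedBy (ProdOneTuple (Fin 3) G) (swap (0 : Fin 3) 1) ≃ G where
  toFun v := v.1.1 0
  invFun x := ⟨ofPair x x, mem_fixedBy_swap_iff.2 rfl⟩
  left_inv v := Subtype.ext (ofPair_eq rfl (mem_fixedBy_swap_iff.1 v.2))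
  right_inv _ := rfl

def fixedByFinRotateEquiv :
    fixedBy (ProdOneTuple (Fin 3) G) (finRotate 3) ≃ (powMonoidHom 3 : G →* G).ker where
  toFun v := ⟨v.1.1 0, by
    obtain ⟨h1, h2⟩ := mem_fixedBy_finRotate_iff.1 v.2
    simpa [Fin.prod_univ_three, h1, h2, pow_three'] using v.1.2⟩
  invFun g := ⟨ofPair g g, mem_fixedBy_finRotate_iff.2 ⟨rfl, show ((g : G) * g)⁻¹ = g from
    inv_eq_of_mul_eq_one_right (by rw [← pow_three']; exact g.2)⟩⟩
  left_inv v := Subtype.ext (ofPair_eq rfl (mem_fixedBy_finRotate_iff.1 v.2).1)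
  right_inv _ := rfl

theorem natCard_fixedBy_one :
    Nat.card (fixedBy (ProdOneTuple (Fin 3) G) (1 : Perm (Fin 3))) = Nat.card G ^ 2 := by
  rw [fixedBy_one_eq_univ, Nat.card_univ, Nat.card_congr equivProd, Nat.card_prod, sq]

theorem six_mul_natCard_orbits [Finite G] :
    6 * Nat.card (Quotient (orbitRel (Perm (Fin 3)) (ProdOneTuple (Fin 3) G))) =
      Nat.card G ^ 2 + 3 * Nat.card G + 2 * Nat.card (powMonoidHom 3 : G →* G).ker := by
  have hburnside :=
    sum_natCard_fixedBy_eq_natCard_orbits_mul_natCard (Perm (Fin 3)) (ProdOneTuple (Fin 3) G)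
  have h02 : swap (0 : Fin 3) 2 = swap 1 2 * swap 0 1 * (swap 1 2)⁻¹ := by decide
  have h12 : swap (1 : Fin 3) 2 = swap 0 2 * swap 0 1 * (swap 0 2)⁻¹ := by decide
  have hrot : (finRotate 3)⁻¹ = swap 1 2 * finRotate 3 * (swap 1 2)⁻¹ := by decide
  rw [Perm.sum_fin_three, h12, h02, hrot, natCard_fixedBy_conj, natCard_fixedBy_conj,
    natCard_fixedBy_conj, natCard_fixedBy_one, Nat.card_congr fixedBySwapEquiv,
    Nat.card_congr fixedByFinRotateEquiv, Nat.card_perm, Nat.card_fin,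
    show Nat.factorial 3 = 6 from rfl] at hburnside
  linarith

theorem six_mul_natCard_orbits_of_isCyclic [Finite G] [IsCyclic G] :
    6 * Nat.card (Quotient (orbitRel (Perm (Fin 3)) (ProdOneTuple (Fin 3) G))) =
      Nat.card G ^ 2 + 3 * Nat.card G + 2 * (Nat.card G).gcd 3 := by
  rw [six_mul_natCard_orbits, IsCyclic.card_powMonoidHom_ker]

end CommGroup

section Field

variable {K : Type*} [Field K] {G : Subgroup Kˣ}

/-- The traces of `diag v ∈ SL₃(K)` and of its inverse. -/
def traces (v : ProdOneTuple (Fin 3) G) : K × K :=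
  (∑ i, ((v.1 i : Kˣ) : K), ∑ i, ((v.1 i : Kˣ) : K)⁻¹)

theorem traces_smul (σ : Perm (Fin 3)) (v : ProdOneTuple (Fin 3) G) :
    traces (σ • v) = traces v :=
  Prod.ext (σ.symm.sum_comp fun i => ((v.1 i : Kˣ) : K))
    (σ.symm.sum_comp fun i => ((v.1 i : Kˣ) : K)⁻¹)

theorem prod_coe_eq_one (v : ProdOneTuple (Fin 3) G) : ∏ i, ((v.1 i : Kˣ) : K) = 1 := by
  simpa using congrArg (fun g : G => ((g : Kˣ) : K)) v.2

theorem mem_orbit_of_traces_eq {v w : ProdOneTuple (Fin 3) G} (h : traces v = traces w) :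
    w ∈ orbit (Perm (Fin 3)) v := by
  obtain ⟨σ, hσ⟩ := Fintype.exists_perm_comp_eq_of_map_univ_eq
    (map_univ_eq_of_sum_eq_of_sum_inv_eq (prod_coe_eq_one v) (prod_coe_eq_one w)
      (congrArg Prod.fst h) (congrArg Prod.snd h)).symm
  exact ⟨σ⁻¹, ext fun i => Subtype.ext (Units.ext (congrFun hσ i))⟩

theorem natCard_range_traces :
    Nat.card (Set.range (traces (G := G))) =
      Nat.card (Quotient (orbitRel (Perm (Fin 3)) (ProdOneTuple (Fin 3) G))) := by
  have hlift (v w : ProdOneTuple (Fin 3) G) (hvw : orbitRel (Perm (Fin 3)) _ v w) :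
      traces v = traces w := by
    obtain ⟨σ, rfl⟩ := hvw
    exact traces_smul σ w
  rw [← Set.range_quotient_lift (s := orbitRel _ _) hlift, Nat.card_range_of_injective]
  rintro ⟨v⟩ ⟨w⟩ h
  exact Quotient.sound (mem_orbit_of_traces_eq h.symm)

theorem traces_ofPair (x y : G) :
    traces (ofPair x y) = (((x : Kˣ) : K) + (y : Kˣ) + ((x : Kˣ) * (y : Kˣ) : K)⁻¹,
      ((x : Kˣ) : K)⁻¹ + ((y : Kˣ) : K)⁻¹ + (x : Kˣ) * (y : Kˣ)) := by
  simp [traces, ofPair, Fin.sum_univ_three]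

theorem range_traces_rootsOfUnity (a : ℕ) [NeZero a] :
    Set.range (traces (G := rootsOfUnity a K)) = {xy : K × K | ∃ ζ ξ : K, ζ ^ a = 1 ∧ ξ ^ a = 1 ∧
      xy = (ζ + ξ + (ζ * ξ)⁻¹, ζ⁻¹ + ξ⁻¹ + ζ * ξ)} := by
  ext xy
  constructor
  · rintro ⟨v, rfl⟩
    refine ⟨_, _, (mem_rootsOfUnity' _ _).1 (v.1 0).2, (mem_rootsOfUnity' _ _).1 (v.1 1).2, ?_⟩
    conv_lhs => rw [← ofPair_eq (v := v) rfl rfl]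
    exact traces_ofPair _ _
  · rintro ⟨ζ, ξ, hζ, hξ, rfl⟩
    exact ⟨ofPair (rootsOfUnity.mkOfPowEq ζ hζ) (rootsOfUnity.mkOfPowEq ξ hξ),
      by simp [traces_ofPair]⟩

end Field

end ProdOneTuple

/-- for a positive integer `a`, the set
`{(ζ + ξ + (ζξ)⁻¹, ζ⁻¹ + ξ⁻¹ + ζξ) : ζ^a = ξ^a = 1} ⊆ ℂ²` has exactly
`(a² + 3a + 2·gcd(a,3))/6` elements. -/
theorem stmt_17 (a : ℕ) (ha : 0 < a) :
    (({xy : ℂ × ℂ | ∃ ζ ξ : ℂ, ζ ^ a = 1 ∧ ξ ^ a = 1 ∧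
        xy = (ζ + ξ + (ζ * ξ)⁻¹, ζ⁻¹ + ξ⁻¹ + ζ * ξ)}).ncard : ℚ)
      = ((a : ℚ) ^ 2 + 3 * a + 2 * Nat.gcd a 3) / 6 := by
  have : NeZero a := ⟨ha.ne'⟩
  have hcount := ProdOneTuple.six_mul_natCard_orbits_of_isCyclic (G := rootsOfUnity a ℂ)
  rw [Complex.card_rootsOfUnity] at hcount
  rw [← ProdOneTuple.range_traces_rootsOfUnity, ← Nat.card_coe_set_eq,
    ProdOneTuple.natCard_range_traces, eq_div_iff (by norm_num)]
  exact_mod_cast (mul_comm _ _).trans hcount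
end

section
/- Let n be a positive integer and let c be a positive integer dividing n² + n + 1. Then the set {(ζ + ζ^n + ζ^{-n-1}, ζ⁻¹ + ζ^{-n} + ζ^{n+1}) : ζ ∈ ℂ, ζ^c = 1} ⊆ ℂ² has exactly (c + 2·gcd(c,3))/3 elements. -/
/-!
Since `n³ - 1 = (n - 1)(n² + n + 1)`, the map `ζ ↦ ζ ^ n` permutes `μ_c` with order dividing 3,
and for `ζ ∈ μ_c` the two coordinates are the first two elementary symmetric functions of the
orbit `{ζ, ζ ^ n, ζ ^ (n²)}`, whose product is 1. By Vieta the map is therefore constant on orbits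
and separates them. The orbits have size 3 except at the fixed points `ζ ^ (n - 1) = 1`, which form
`μ_gcd(c, 3)` because `n² + n + 1 = (n - 1)(n + 2) + 3`. Hence 3 · #orbits = c + 2 gcd(c, 3).
-/

open Finset Polynomial

namespace Finset

variable {α β : Type*} [DecidableEq α] [DecidableEq β] {s : Finset α} {f : α → β} {g : α → α}

theorem card_fiber_add_two_mul_card_fixed_fiber (hg : ∀ x ∈ s, g (g (g x)) = x)
    (hfiber : ∀ x ∈ s, {y ∈ s | f y = f x} = {x, g x, g (g x)}) {x : α} (hx : x ∈ s) :
    #{y ∈ s | f y = f x} + 2 * #{y ∈ {y ∈ s | g y = y} | f y = f x} = 3 := by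
  rw [filter_filter]
  by_cases hfix : g x = x
  · have hsingle : {y ∈ s | f y = f x} = {x} := by rw [hfiber x hx, hfix, hfix]; simp
    have hfixed : {y ∈ s | g y = y ∧ f y = f x} = {x} := by
      ext y
      refine ⟨fun hy => ?_, fun hy => ?_⟩
      · obtain ⟨hys, -, hfy⟩ := mem_filter.mp hy
        have hy' : y ∈ {y ∈ s | f y = f x} := mem_filter.mpr ⟨hys, hfy⟩
        rwa [hsingle] at hy'
      · rw [mem_singleton.mp hy]; exact mem_filter.mpr ⟨hx, hfix, rfl⟩
    rw [hsingle, hfixed, card_singleton]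
  · have hgg : g (g x) ≠ x := fun h => hfix (by simpa [h] using hg x hx)
    have hgg' : g (g x) ≠ g x := fun h => hfix (by simpa [h] using hg x hx)
    have hnone : {y ∈ s | g y = y ∧ f y = f x} = ∅ := by
      refine filter_eq_empty_iff.mpr fun y hy ⟨hgy, hfy⟩ => hfix ?_
      have : x ∈ {y ∈ s | f y = f x} := mem_filter.mpr ⟨hx, rfl⟩
      rw [← hfy, hfiber y hy, hgy, hgy] at this
      simp only [mem_insert, mem_singleton, or_self] at this
      rwa [this]
    rw [hfiber x hx, hnone, card_empty, card_insert_of_notMem, card_pair hgg'.symm]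
    simp [Ne.symm hfix, hgg.symm]

theorem three_mul_card_image_eq (hg : ∀ x ∈ s, g (g (g x)) = x)
    (hfiber : ∀ x ∈ s, {y ∈ s | f y = f x} = {x, g x, g (g x)}) :
    3 * #(s.image f) = #s + 2 * #{x ∈ s | g x = x} := by
  rw [card_eq_sum_card_image f s, card_eq_sum_card_fiberwise (t := s.image f)
    fun x hx => mem_image_of_mem f (mem_filter.mp hx).1, mul_sum, ← sum_add_distrib,
    mul_comm, ← smul_eq_mul, ← sum_const]
  refine sum_congr rfl fun b hb => ?_
  obtain ⟨x, hx, rfl⟩ := mem_image.mp hb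
  exact (card_fiber_add_two_mul_card_fixed_fiber hg hfiber hx).symm

end Finset

theorem Nat.gcd_sub_one_eq_gcd_three {n c : ℕ} (hn : 0 < n) (hdvd : c ∣ n ^ 2 + n + 1) :
    c.gcd (n - 1) = c.gcd 3 := by
  obtain ⟨m, rfl⟩ : ∃ m, n = m + 1 := ⟨n - 1, by omega⟩
  rw [add_tsub_cancel_right]
  rw [show (m + 1) ^ 2 + (m + 1) + 1 = m * (m + 3) + 3 by ring] at hdvd
  refine Nat.dvd_antisymm (Nat.dvd_gcd (c.gcd_dvd_left m) ?_)
    (Nat.dvd_gcd (c.gcd_dvd_left 3) ?_)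
  · exact (Nat.dvd_add_right (dvd_mul_of_dvd_left (c.gcd_dvd_right m) _)).mp
      ((c.gcd_dvd_left m).trans hdvd)
  · have hsq : c.gcd 3 ∣ m * m := by
      have := (Nat.dvd_add_left (c.gcd_dvd_right 3)).mp ((c.gcd_dvd_left 3).trans hdvd)
      rw [mul_add] at this
      exact (Nat.dvd_add_left (dvd_mul_of_dvd_right (c.gcd_dvd_right 3) m)).mp this
    rcases Nat.prime_three.eq_one_or_self_of_dvd _ (c.gcd_dvd_right 3) with h | h
    · rw [h]; exact one_dvd m
    · rw [h] at hsq ⊢; exact (Nat.prime_three.dvd_mul.mp hsq).elim id id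

section NthRoots

variable {R : Type*} [CommRing R] [IsDomain R]

theorem pow_eq_one_of_mem_nthRootsFinset {c m : ℕ} (hc : 0 < c) {ζ : R}
    (hζ : ζ ∈ nthRootsFinset c (1 : R)) (hcm : c ∣ m) : ζ ^ m = 1 :=
  orderOf_dvd_iff_pow_eq_one.mp
    ((orderOf_dvd_of_pow_eq_one ((mem_nthRootsFinset hc 1).mp hζ)).trans hcm)

theorem pow_mem_nthRootsFinset {c : ℕ} (hc : 0 < c) {ζ : R} (hζ : ζ ∈ nthRootsFinset c (1 : R))
    (m : ℕ) : ζ ^ m ∈ nthRootsFinset c (1 : R) := by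
  rw [mem_nthRootsFinset hc, ← pow_mul, mul_comm, pow_mul, (mem_nthRootsFinset hc 1).mp hζ,
    one_pow]

end NthRoots

section OrbitSymm

variable {K : Type*} [Field K] {n c : ℕ}

def orbitSymm (n : ℕ) (ζ : K) : K × K :=
  (ζ + ζ ^ n + (ζ ^ (n + 1))⁻¹, ζ⁻¹ + (ζ ^ n)⁻¹ + ζ ^ (n + 1))

theorem sub_mul_sub_mul_sub_eq_orbitSymm {ζ : K} (hζ : ζ ≠ 0) (x : K) :
    (x - ζ) * (x - ζ ^ n) * (x - (ζ ^ (n + 1))⁻¹) =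
      x ^ 3 - (orbitSymm n ζ).1 * x ^ 2 + (orbitSymm n ζ).2 * x - 1 := by
  simp only [orbitSymm]
  field_simp
  ring

theorem eq_or_eq_pow_or_eq_inv_of_orbitSymm_eq {ζ η : K} (hζ : ζ ≠ 0) (hη : η ≠ 0)
    (h : orbitSymm n η = orbitSymm n ζ) : η = ζ ∨ η = ζ ^ n ∨ η = (ζ ^ (n + 1))⁻¹ := by
  have hroot : (η - ζ) * (η - ζ ^ n) * (η - (ζ ^ (n + 1))⁻¹) = 0 := by
    rw [sub_mul_sub_mul_sub_eq_orbitSymm hζ, ← h, ← sub_mul_sub_mul_sub_eq_orbitSymm hη]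
    ring
  simpa only [mul_eq_zero, sub_eq_zero, or_assoc] using hroot

theorem pow_pow_eq_inv_pow_succ {ζ : K} (hζ : ζ ^ (n ^ 2 + n + 1) = 1) :
    (ζ ^ n) ^ n = (ζ ^ (n + 1))⁻¹ :=
  eq_inv_of_mul_eq_one_left (by rw [← pow_mul, ← pow_add, ← hζ]; ring_nf)

theorem pow_pow_succ_eq_inv {ζ : K} (hζ : ζ ^ (n ^ 2 + n + 1) = 1) :
    (ζ ^ n) ^ (n + 1) = ζ⁻¹ :=
  eq_inv_of_mul_eq_one_left (by rw [← pow_mul, ← pow_succ, ← hζ]; ring_nf)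

theorem pow_pow_pow_eq_self {ζ : K} (hζ : ζ ^ (n ^ 2 + n + 1) = 1) :
    ((ζ ^ n) ^ n) ^ n = ζ := by
  have h := congrArg (ζ ^ ·) (show n ^ 3 + (n ^ 2 + n + 1) = (n ^ 2 + n + 1) * n + 1 by ring)
  simp only [pow_add, pow_mul, hζ, one_pow, mul_one, one_mul, pow_one] at h
  rw [← pow_mul, ← pow_mul, show n * (n * n) = n ^ 3 by ring, h]

theorem orbitSymm_pow {ζ : K} (hζ : ζ ^ (n ^ 2 + n + 1) = 1) :
    orbitSymm n (ζ ^ n) = orbitSymm n ζ := by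
  simp only [orbitSymm, pow_pow_eq_inv_pow_succ hζ, pow_pow_succ_eq_inv hζ, inv_inv]
  ext <;> ring

section Fibers

variable [DecidableEq K]

theorem filter_nthRootsFinset_orbitSymm_eq (hc : 0 < c) (hdvd : c ∣ n ^ 2 + n + 1) {ζ : K}
    (hζ : ζ ∈ nthRootsFinset c (1 : K)) :
    {η ∈ nthRootsFinset c (1 : K) | orbitSymm n η = orbitSymm n ζ} =
      {ζ, ζ ^ n, (ζ ^ n) ^ n} := by
  have hζn := pow_mem_nthRootsFinset hc hζ n
  ext η
  simp only [mem_filter, mem_insert, mem_singleton]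
  constructor
  · rintro ⟨hη, h⟩
    rw [pow_pow_eq_inv_pow_succ (pow_eq_one_of_mem_nthRootsFinset hc hζ hdvd)]
    exact eq_or_eq_pow_or_eq_inv_of_orbitSymm_eq (ne_zero_of_mem_nthRootsFinset one_ne_zero hζ)
      (ne_zero_of_mem_nthRootsFinset one_ne_zero hη) h
  · rintro (rfl | rfl | rfl)
    · exact ⟨hζ, rfl⟩
    · exact ⟨hζn, orbitSymm_pow (pow_eq_one_of_mem_nthRootsFinset hc hζ hdvd)⟩
    · exact ⟨pow_mem_nthRootsFinset hc hζn n,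
        (orbitSymm_pow (pow_eq_one_of_mem_nthRootsFinset hc hζn hdvd)).trans
          (orbitSymm_pow (pow_eq_one_of_mem_nthRootsFinset hc hζ hdvd))⟩

theorem filter_nthRootsFinset_pow_eq_self (hn : 0 < n) (hc : 0 < c) (hdvd : c ∣ n ^ 2 + n + 1) :
    {ζ ∈ nthRootsFinset c (1 : K) | ζ ^ n = ζ} = nthRootsFinset (c.gcd 3) 1 := by
  ext ζ
  rw [mem_filter, mem_nthRootsFinset hc, mem_nthRootsFinset (Nat.gcd_pos_of_pos_left 3 hc),
    ← Nat.gcd_sub_one_eq_gcd_three hn hdvd, pow_gcd_eq_one]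
  refine and_congr_right fun hζ => ?_
  have hζ0 : ζ ≠ 0 := by rintro rfl; simp [zero_pow hc.ne'] at hζ
  rw [show ζ ^ n = ζ ^ (n - 1) * ζ by rw [← pow_succ, Nat.sub_add_cancel hn], mul_eq_right₀ hζ0]

end Fibers

end OrbitSymm

/-- for a positive integer `n` and a positive divisor `c` of `n² + n + 1`,
the set `{(ζ + ζ^n + ζ^{-n-1}, ζ⁻¹ + ζ^{-n} + ζ^{n+1}) : ζ^c = 1} ⊆ ℂ²` has exactly
`(c + 2·gcd(c,3))/3` elements. -/
theorem stmt_18 (n c : ℕ) (hn : 0 < n) (hc : 0 < c) (hdvd : c ∣ n ^ 2 + n + 1) :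
    (({xy : ℂ × ℂ | ∃ ζ : ℂ, ζ ^ c = 1 ∧
        xy = (ζ + ζ ^ n + (ζ ^ (n + 1))⁻¹, ζ⁻¹ + (ζ ^ n)⁻¹ + ζ ^ (n + 1))}).ncard : ℚ)
      = ((c : ℚ) + 2 * Nat.gcd c 3) / 3 := by
  classical
  set S := nthRootsFinset c (1 : ℂ)
  have hset : {xy : ℂ × ℂ | ∃ ζ : ℂ, ζ ^ c = 1 ∧
      xy = (ζ + ζ ^ n + (ζ ^ (n + 1))⁻¹, ζ⁻¹ + (ζ ^ n)⁻¹ + ζ ^ (n + 1))} =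
        S.image (orbitSymm n) := by
    ext xy
    simp [S, mem_nthRootsFinset hc, orbitSymm, eq_comm]
  have hcount : 3 * #(S.image (orbitSymm n)) = #S + 2 * #{ζ ∈ S | ζ ^ n = ζ} :=
    three_mul_card_image_eq
      (fun ζ hζ => pow_pow_pow_eq_self (pow_eq_one_of_mem_nthRootsFinset hc hζ hdvd))
      (fun ζ hζ => filter_nthRootsFinset_orbitSymm_eq hc hdvd hζ)
  rw [filter_nthRootsFinset_pow_eq_self hn hc hdvd,
    (Complex.isPrimitiveRoot_exp c hc.ne').card_nthRootsFinset,
    (Complex.isPrimitiveRoot_exp _ (Nat.gcd_pos_of_pos_left 3 hc).ne').card_nthRootsFinset]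
    at hcount
  rw [hset, Set.ncard_coe_finset, eq_div_iff three_ne_zero, mul_comm]
  exact_mod_cast hcount
end

section
/- Let q ≥ 2 be a power of a prime and let k be a positive integer. Let D_k denote the k-th Dickson polynomial. Set a = (q-1)/gcd(q-1,k) and b = (q+1)/gcd(q+1,k). Then the image under the evaluation map x ↦ D_k(x) of the set {ζ + ζ⁻¹ : ζ ∈ ℂ, ζ^{q-1} = 1} ∪ {ζ + ζ⁻¹ : ζ ∈ ℂ, ζ^{q+1} = 1} equals {ζ + ζ⁻¹ : ζ ∈ ℂ, ζ^a = 1} ∪ {ζ + ζ⁻¹ : ζ ∈ ℂ, ζ^b = 1}, and this image has exactly a/2 + b/2 + η elements, where η = 0 if gcd(a,2) = gcd(b,2) and η = 1/2 otherwise. -/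
/-! The substitution `x = ζ + ζ⁻¹` turns `D_k` into `ζ ↦ ζ ^ k`, which maps the `n`-th roots of
unity onto the `(n / gcd n k)`-th roots of unity; hence `D_k` maps the traces `ζ + ζ⁻¹` of `n`-th
roots of unity onto those of `(n / gcd n k)`-th roots. Over `ℂ` these traces are the
`⌊n/2⌋ + 1` distinct numbers `2 cos (2πj/n)`, `0 ≤ j ≤ n/2`. The sets of traces for `a` and `b`
meet in the traces for `gcd a b`, which divides `(q + 1) - (q - 1) = 2`, and inclusion–exclusion
gives the count. -/

open Polynomial Set Real Complex

def rootsOfUnityTraces (K : Type*) [Field K] (n : ℕ) : Set K :=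
  {x | ∃ ζ : K, ζ ^ n = 1 ∧ x = ζ + ζ⁻¹}

section Field

variable {K : Type*} [Field K]

lemma eq_or_eq_inv_of_add_inv_eq_add_inv_s19 {ζ ξ : K} (hζ : ζ ≠ 0) (hξ : ξ ≠ 0)
    (h : ζ + ζ⁻¹ = ξ + ξ⁻¹) : ξ = ζ ∨ ξ = ζ⁻¹ := by
  have hfactor : (ζ - ξ) * (ζ * ξ - 1) = 0 := by
    field_simp at h
    linear_combination h
  rcases mul_eq_zero.mp hfactor with h | h
  · exact .inl (by linear_combination -h)
  · exact .inr (eq_inv_of_mul_eq_one_left (by linear_combination h))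

lemma IsPrimitiveRoot.image_pow_rootsOfUnity {ω : K} {n : ℕ} (hω : IsPrimitiveRoot ω n)
    (hn : n ≠ 0) (k : ℕ) :
    (· ^ k) '' {ζ : K | ζ ^ n = 1} = {ξ : K | ξ ^ (n / n.gcd k) = 1} := by
  have hωk : IsPrimitiveRoot (ω ^ k) (n / n.gcd k) := by
    rw [hω.eq_orderOf, ← (hω.isOfFinOrder hn).orderOf_pow]
    exact .orderOf _
  ext ξ
  constructor
  · rintro ⟨ζ, hζ, rfl⟩
    rw [mem_ofPred_eq, ← pow_mul, ← Nat.mul_div_assoc _ (Nat.gcd_dvd_left n k), mul_comm,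
      Nat.mul_div_assoc _ (Nat.gcd_dvd_right n k), pow_mul, mem_ofPred_eq.mp hζ, one_pow]
  · intro hξ
    have : NeZero (n / n.gcd k) := ⟨(Nat.div_gcd_pos_of_pos_left k hn.bot_lt).ne'⟩
    obtain ⟨i, -, rfl⟩ := hωk.eq_pow_of_pow_eq_one hξ
    exact ⟨ω ^ i, by rw [mem_ofPred_eq, ← pow_mul, mul_comm, pow_mul, hω.pow_eq_one, one_pow],
      by rw [← pow_mul, mul_comm, pow_mul]⟩

lemma dickson_one_one_aeval_add_of_mul_eq_one {R : Type*} [CommRing R] {x y : R} (h : x * y = 1)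
    (k : ℕ) :
    aeval (x + y) (dickson 1 (1 : ℤ) k) = x ^ k + y ^ k := by
  rw [aeval_def, ← eval_map, map_dickson, map_one, dickson_one_one_eval_add_inv x y h]

lemma IsPrimitiveRoot.image_dickson_rootsOfUnityTraces {ω : K} {n : ℕ}
    (hω : IsPrimitiveRoot ω n) (hn : n ≠ 0) (k : ℕ) :
    (fun x : K => aeval x (dickson 1 (1 : ℤ) k)) '' rootsOfUnityTraces K n
      = rootsOfUnityTraces K (n / n.gcd k) := by
  have hD : ∀ ζ : K, ζ ^ n = 1 →
      aeval (ζ + ζ⁻¹) (dickson 1 (1 : ℤ) k) = ζ ^ k + (ζ ^ k)⁻¹ := fun ζ hζ => by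
    rw [dickson_one_one_aeval_add_of_mul_eq_one
      (mul_inv_cancel₀ (IsUnit.of_pow_eq_one hζ hn).ne_zero), inv_pow]
  ext x
  simp only [rootsOfUnityTraces, mem_image, mem_ofPred_eq]
  constructor
  · rintro ⟨-, ⟨ζ, hζ, rfl⟩, rfl⟩
    have : ζ ^ k ∈ (· ^ k) '' {ζ : K | ζ ^ n = 1} := ⟨ζ, hζ, rfl⟩
    rw [hω.image_pow_rootsOfUnity hn] at this
    exact ⟨ζ ^ k, this, hD ζ hζ⟩
  · rintro ⟨ξ, hξ, rfl⟩
    have : ξ ∈ (· ^ k) '' {ζ : K | ζ ^ n = 1} := by rwa [hω.image_pow_rootsOfUnity hn]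
    obtain ⟨ζ, hζ, rfl⟩ := this
    exact ⟨ζ + ζ⁻¹, ⟨ζ, hζ, rfl⟩, hD ζ hζ⟩

lemma rootsOfUnityTraces_mono {m n : ℕ} (h : m ∣ n) :
    rootsOfUnityTraces K m ⊆ rootsOfUnityTraces K n := by
  rintro x ⟨ζ, hζ, rfl⟩
  exact ⟨ζ, orderOf_dvd_iff_pow_eq_one.mp ((orderOf_dvd_of_pow_eq_one hζ).trans h), rfl⟩

lemma rootsOfUnityTraces_inter {m n : ℕ} (hm : m ≠ 0) (hn : n ≠ 0) :
    rootsOfUnityTraces K m ∩ rootsOfUnityTraces K n = rootsOfUnityTraces K (m.gcd n) := by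
  refine Subset.antisymm ?_ (subset_inter (rootsOfUnityTraces_mono (Nat.gcd_dvd_left m n))
    (rootsOfUnityTraces_mono (Nat.gcd_dvd_right m n)))
  rintro x ⟨⟨ζ, hζ, rfl⟩, ⟨ξ, hξ, hx⟩⟩
  have hζn : ζ ^ n = 1 := by
    rcases eq_or_eq_inv_of_add_inv_eq_add_inv_s19 ((IsUnit.of_pow_eq_one hζ hm).ne_zero)
      (IsUnit.of_pow_eq_one hξ hn).ne_zero hx with rfl | rfl
    · exact hξ
    · rwa [inv_pow, inv_eq_one] at hξ
  exact ⟨ζ, pow_gcd_eq_one.mpr ⟨hζ, hζn⟩, rfl⟩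

end Field

lemma exp_two_pi_I_div_pow_add_inv (n m : ℕ) :
    exp (2 * π * I / n) ^ m + (exp (2 * π * I / n) ^ m)⁻¹
      = (2 * Real.cos (2 * π * m / n) : ℝ) := by
  rw [← Complex.exp_nat_mul, ← Complex.exp_neg, ofReal_mul, ofReal_ofNat, ofReal_cos, two_cos]
  congr 2 <;> push_cast <;> ring

lemma rootsOfUnityTraces_complex_eq_image {n : ℕ} (hn : n ≠ 0) :
    rootsOfUnityTraces ℂ n
      = (fun j : ℕ => ((2 * Real.cos (2 * π * j / n) : ℝ) : ℂ)) '' Iic (n / 2) := by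
  have hω := isPrimitiveRoot_exp n hn
  have : NeZero n := ⟨hn⟩
  ext x
  constructor
  · rintro ⟨ζ, hζ, rfl⟩
    obtain ⟨m, hm, rfl⟩ := hω.eq_pow_of_pow_eq_one hζ
    rw [exp_two_pi_I_div_pow_add_inv]
    by_cases hm2 : m ≤ n / 2
    · exact ⟨m, hm2, rfl⟩
    · refine ⟨n - m, by simp only [mem_Iic]; omega, ?_⟩
      have harg : 2 * π * ((n - m : ℕ) : ℝ) / n = 2 * π - 2 * π * m / n := by
        rw [Nat.cast_sub hm.le]
        field_simp
      simp only [harg, Real.cos_two_pi_sub]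
  · rintro ⟨j, -, rfl⟩
    exact ⟨exp (2 * π * I / n) ^ j, by rw [pow_right_comm, hω.pow_eq_one, one_pow],
      (exp_two_pi_I_div_pow_add_inv n j).symm⟩

lemma injOn_two_cos_two_pi_div {n : ℕ} (hn : n ≠ 0) :
    InjOn (fun j : ℕ => ((2 * Real.cos (2 * π * j / n) : ℝ) : ℂ)) (Iic (n / 2)) := by
  have hmem : ∀ j ∈ Iic (n / 2), 2 * π * j / n ∈ Icc 0 π := fun j hj => by
    have h2j : (2 * j : ℝ) ≤ n := by
      exact_mod_cast (by simp only [mem_Iic] at hj; omega : 2 * j ≤ n)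
    refine ⟨by positivity, ?_⟩
    rw [div_le_iff₀ (by positivity)]
    nlinarith [pi_pos]
  intro i hi j hj h
  have hcos := injOn_cos (hmem i hi) (hmem j hj)
    (mul_left_cancel₀ two_ne_zero (ofReal_injective h))
  have : (i : ℝ) = j := by
    field_simp at hcos
    exact hcos
  exact_mod_cast this

lemma ncard_rootsOfUnityTraces_complex {n : ℕ} (hn : n ≠ 0) :
    (rootsOfUnityTraces ℂ n).ncard = n / 2 + 1 := by
  rw [rootsOfUnityTraces_complex_eq_image hn, (injOn_two_cos_two_pi_div hn).ncard_image,
    ← Finset.coe_Iic, ncard_coe_finset, Nat.card_Iic]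

lemma finite_rootsOfUnityTraces_complex {n : ℕ} (hn : n ≠ 0) :
    (rootsOfUnityTraces ℂ n).Finite := by
  rw [rootsOfUnityTraces_complex_eq_image hn]
  exact (finite_Iic _).image _

lemma cast_div_two_add_div_two_add_one_sub_gcd_div_two {a b : ℕ} (h : a.gcd b ∣ 2) :
    ((a / 2 + b / 2 + 1 - a.gcd b / 2 : ℕ) : ℚ)
      = a / 2 + b / 2 + if a.gcd 2 = b.gcd 2 then 0 else 1 / 2 := by
  have hgcd : a.gcd b / 2 = if 2 ∣ a ∧ 2 ∣ b then 1 else 0 := by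
    rcases (Nat.dvd_prime Nat.prime_two).mp h with hg | hg <;> simp [← Nat.dvd_gcd_iff, hg]
  rw [hgcd]
  rcases Nat.even_or_odd' a with ⟨a, rfl | rfl⟩ <;> rcases Nat.even_or_odd' b with ⟨b, rfl | rfl⟩
    <;> simp [Nat.dvd_add_right, Nat.mul_add_div two_pos] <;> ring

lemma ncard_rootsOfUnityTraces_complex_union {m n : ℕ} (hm : m ≠ 0) (hn : n ≠ 0) :
    (rootsOfUnityTraces ℂ m ∪ rootsOfUnityTraces ℂ n).ncard
      = m / 2 + n / 2 + 1 - m.gcd n / 2 := by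
  have h := ncard_union_add_ncard_inter _ _ (finite_rootsOfUnityTraces_complex hm)
    (finite_rootsOfUnityTraces_complex hn)
  rw [rootsOfUnityTraces_inter hm hn, ncard_rootsOfUnityTraces_complex hm,
    ncard_rootsOfUnityTraces_complex hn,
    ncard_rootsOfUnityTraces_complex (Nat.gcd_ne_zero_left hm)] at h
  have := Nat.gcd_le_left n hm.bot_lt
  omega

theorem stmt_19_general (q k : ℕ) (hq : IsPrimePow q)
    (a b : ℕ) (ha : a = (q - 1) / Nat.gcd (q - 1) k) (hb : b = (q + 1) / Nat.gcd (q + 1) k)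
    (η : ℚ) (hη : η = if Nat.gcd a 2 = Nat.gcd b 2 then 0 else 1 / 2) :
    (fun x : ℂ => Polynomial.aeval x (Polynomial.dickson 1 (1 : ℤ) k)) ''
        ({x : ℂ | ∃ ζ : ℂ, ζ ^ (q - 1) = 1 ∧ x = ζ + ζ⁻¹}
          ∪ {x : ℂ | ∃ ζ : ℂ, ζ ^ (q + 1) = 1 ∧ x = ζ + ζ⁻¹})
      = ({x : ℂ | ∃ ζ : ℂ, ζ ^ a = 1 ∧ x = ζ + ζ⁻¹}
          ∪ {x : ℂ | ∃ ζ : ℂ, ζ ^ b = 1 ∧ x = ζ + ζ⁻¹})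
    ∧ (((fun x : ℂ => Polynomial.aeval x (Polynomial.dickson 1 (1 : ℤ) k)) ''
        ({x : ℂ | ∃ ζ : ℂ, ζ ^ (q - 1) = 1 ∧ x = ζ + ζ⁻¹}
          ∪ {x : ℂ | ∃ ζ : ℂ, ζ ^ (q + 1) = 1 ∧ x = ζ + ζ⁻¹})).ncard : ℚ)
      = (a : ℚ) / 2 + (b : ℚ) / 2 + η := by
  have hqm : q - 1 ≠ 0 := by have := hq.two_le; omega
  have hqp : q + 1 ≠ 0 := q.succ_ne_zero
  have himage : (fun x : ℂ => aeval x (dickson 1 (1 : ℤ) k)) ''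
      (rootsOfUnityTraces ℂ (q - 1) ∪ rootsOfUnityTraces ℂ (q + 1))
        = rootsOfUnityTraces ℂ a ∪ rootsOfUnityTraces ℂ b := by
    rw [image_union, (isPrimitiveRoot_exp _ hqm).image_dickson_rootsOfUnityTraces hqm,
      (isPrimitiveRoot_exp _ hqp).image_dickson_rootsOfUnityTraces hqp, ← ha, ← hb]
  have ha₀ : a ≠ 0 := ha ▸ (Nat.div_gcd_pos_of_pos_left k hqm.bot_lt).ne'
  have hb₀ : b ≠ 0 := hb ▸ (Nat.div_gcd_pos_of_pos_left k hqp.bot_lt).ne'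
  have hgcd : a.gcd b ∣ 2 := by
    have haq : a ∣ q - 1 := ha ▸ Nat.div_dvd_of_dvd (Nat.gcd_dvd_left _ _)
    have hbq : b ∣ q + 1 := hb ▸ Nat.div_dvd_of_dvd (Nat.gcd_dvd_left _ _)
    have h := Nat.dvd_sub ((Nat.gcd_dvd_right a b).trans hbq) ((Nat.gcd_dvd_left a b).trans haq)
    rwa [show q + 1 - (q - 1) = 2 by omega] at h
  refine ⟨himage, ?_⟩
  change ((_ '' (rootsOfUnityTraces ℂ (q - 1) ∪ rootsOfUnityTraces ℂ (q + 1))).ncard : ℚ) = _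
  rw [himage, ncard_rootsOfUnityTraces_complex_union ha₀ hb₀, hη]
  exact cast_div_two_add_div_two_add_one_sub_gcd_div_two hgcd

/-- for a prime power `q ≥ 2` and a positive integer `k`, the image of
`{ζ + ζ⁻¹ : ζ^(q-1) = 1} ∪ {ζ + ζ⁻¹ : ζ^(q+1) = 1}` under `x ↦ D_k(x)` equals
`{ζ + ζ⁻¹ : ζ^a = 1} ∪ {ζ + ζ⁻¹ : ζ^b = 1}`, and this image has exactly
`a/2 + b/2 + η` elements. -/
theorem stmt_19 (q k : ℕ) (hq : IsPrimePow q) (hk : 0 < k)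
    (a b : ℕ) (ha : a = (q - 1) / Nat.gcd (q - 1) k) (hb : b = (q + 1) / Nat.gcd (q + 1) k)
    (η : ℚ) (hη : η = if Nat.gcd a 2 = Nat.gcd b 2 then 0 else 1 / 2) :
    (fun x : ℂ => Polynomial.aeval x (Polynomial.dickson 1 (1 : ℤ) k)) ''
        ({x : ℂ | ∃ ζ : ℂ, ζ ^ (q - 1) = 1 ∧ x = ζ + ζ⁻¹}
          ∪ {x : ℂ | ∃ ζ : ℂ, ζ ^ (q + 1) = 1 ∧ x = ζ + ζ⁻¹})
      = ({x : ℂ | ∃ ζ : ℂ, ζ ^ a = 1 ∧ x = ζ + ζ⁻¹}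
          ∪ {x : ℂ | ∃ ζ : ℂ, ζ ^ b = 1 ∧ x = ζ + ζ⁻¹})
    ∧ (((fun x : ℂ => Polynomial.aeval x (Polynomial.dickson 1 (1 : ℤ) k)) ''
        ({x : ℂ | ∃ ζ : ℂ, ζ ^ (q - 1) = 1 ∧ x = ζ + ζ⁻¹}
          ∪ {x : ℂ | ∃ ζ : ℂ, ζ ^ (q + 1) = 1 ∧ x = ζ + ζ⁻¹})).ncard : ℚ)
      = (a : ℚ) / 2 + (b : ℚ) / 2 + η :=
  stmt_19_general q k hq a b ha hb η hη
end
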